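/- arXiv:2106.00627 — 12 statements merged into one kernel-verified Lean document; each statement's English description precedes it below -/
import Mathlib

section
/- For every integer γ ≥ 0 one has F₅(γ)/(8π) ≤ a·γ + b, where a = 89/(6·(4√15 − 52)) + 5/6 and b = 115/(4√15 − 52) + 6; moreover a ≤ 0.4271 and b ≤ 2.8501. -/
open Real

def d (n γ : ℤ) : ℤ := ⌈(n : ℚ) * (γ : ℚ) / ((n : ℚ) + 1)⌉ + n

noncomputable def δ (n γ : ℤ) : ℝ := 1 + ((γ : ℝ) - 1) / ((d n γ : ℤ) : ℝ)

noncomputable def F (a : ℝ) (n γ : ℤ) : ℝ :=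
  8 * π * ((d n γ : ℤ) : ℝ) *
    (1 + (2 * a ^ 2 * δ n γ - ((n : ℝ) - 1) / ((n : ℝ) + 1)) /
      ((2 * a - 1) ^ 2 + ((n : ℝ) - 1) / ((n : ℝ) + 1)))

noncomputable def F₅ (γ : ℤ) : ℝ := F (1 / Real.sqrt 60) 5 γ

noncomputable def ξ (n γ : ℤ) : ℝ := (n : ℝ) * δ n γ + ((n : ℝ) - 1)

noncomputable def aMin (n γ : ℤ) : ℝ :=
  (ξ n γ - Real.sqrt (ξ n γ ^ 2 - 2 * ((n : ℝ) ^ 2 - 1) * δ n γ)) /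
    (2 * δ n γ * ((n : ℝ) + 1))

noncomputable def aMax (n γ : ℤ) : ℝ :=
  (ξ n γ + Real.sqrt (ξ n γ ^ 2 - 2 * ((n : ℝ) ^ 2 - 1) * δ n γ)) /
    (2 * δ n γ * ((n : ℝ) + 1))

theorem stmt_1 (γ : ℤ) (hγ : 0 ≤ γ) :
    F₅ γ / (8 * π) ≤
      (89 / (6 * (4 * Real.sqrt 15 - 52)) + 5 / 6) * (γ : ℝ) +
        (115 / (4 * Real.sqrt 15 - 52) + 6) ∧
    89 / (6 * (4 * Real.sqrt 15 - 52)) + 5 / 6 ≤ 0.4271 ∧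
    115 / (4 * Real.sqrt 15 - 52) + 6 ≤ 2.8501 := by
  set s := Real.sqrt 15 with hs
  have hs0 : (0:ℝ) ≤ 15 := by norm_num
  have hs2 : s ^ 2 = 15 := Real.sq_sqrt hs0
  have hslb : 3.8729 ≤ s := by
    rw [hs, show (3.8729:ℝ) = Real.sqrt (3.8729^2) by
      rw [Real.sqrt_sq (by norm_num)]]
    exact Real.sqrt_le_sqrt (by norm_num)
  have hsub : s ≤ 3.873 := by
    rw [hs, show (3.873:ℝ) = Real.sqrt (3.873^2) by
      rw [Real.sqrt_sq (by norm_num)]]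
    exact Real.sqrt_le_sqrt (by norm_num)
  have hspos : (0:ℝ) < s := by linarith
  have hc : (0:ℝ) < 26 - 2 * s := by linarith
  have hc' : 4 * s - 52 ≠ 0 := by intro h; nlinarith
  -- integer bounds on d 5 γ
  set k : ℤ := d 5 γ with hk
  have hdk : k = ⌈(5 : ℚ) * (γ : ℚ) / 6⌉ + 5 := by
    rw [hk]; unfold d; norm_num
  have hub : 6 * k ≤ 5 * γ + 35 := by
    have h1 : ((⌈(5 : ℚ) * (γ : ℚ) / 6⌉ : ℚ)) < (5 : ℚ) * (γ : ℚ) / 6 + 1 :=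
      Int.ceil_lt_add_one _
    have h2 : (6 : ℚ) * k < 5 * γ + 36 := by
      rw [hdk]; push_cast; push_cast at h1; linarith
    have h3 : (6 * k : ℚ) < ((5 * γ + 36 : ℤ) : ℚ) := by push_cast; linarith [h2]
    have := Int.lt_iff_add_one_le.mp (by exact_mod_cast h3)
    omega
  have hlb : 5 * γ + 30 ≤ 6 * k := by
    have h1 : (5 : ℚ) * (γ : ℚ) / 6 ≤ ((⌈(5 : ℚ) * (γ : ℚ) / 6⌉ : ℚ)) :=
      Int.le_ceil _
    have h2 : ((5 * γ + 30 : ℤ) : ℚ) ≤ ((6 * k : ℤ) : ℚ) := by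
      rw [hdk]; push_cast; push_cast at h1; linarith
    exact_mod_cast h2
  have hk5 : 5 ≤ k := by omega
  have hkR : (5:ℝ) ≤ (k:ℝ) := by exact_mod_cast hk5
  have hkne : ((k:ℝ)) ≠ 0 := by positivity
  have hgR : (0:ℝ) ≤ (γ:ℝ) := by exact_mod_cast hγ
  have hubR : 6 * (k:ℝ) ≤ 5 * (γ:ℝ) + 35 := by exact_mod_cast hub
  -- sqrt 60 = 2 s
  have h60 : Real.sqrt 60 = 2 * s := by
    rw [hs, show (60:ℝ) = 4 * 15 by norm_num, Real.sqrt_mul (by norm_num),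
      show (4:ℝ) = 2^2 by norm_num, Real.sqrt_sq (by norm_num)]
  have hpi : π ≠ 0 := Real.pi_ne_zero
  have hDenom : (2 * (1 / Real.sqrt 60) - 1) ^ 2 + ((5:ℝ) - 1) / ((5:ℝ) + 1)
      = (26 - 2 * s) / 15 := by
    rw [h60]
    field_simp
    linear_combination (12 * s - 6) * hs2
  -- key formula
  have key : F₅ γ / (8 * π) = (k:ℝ) + ((γ:ℝ) - 1 - 19 * (k:ℝ)) / (2 * (26 - 2 * s)) := by
    unfold F₅ F δ
    rw [← hk]
    push_cast
    rw [hDenom]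
    have ha2 : (1 / Real.sqrt 60) ^ 2 = 1 / 60 := by
      rw [h60]; rw [div_pow, one_pow, mul_pow, hs2]; norm_num
    rw [ha2]
    field_simp
    ring
  have e1 : 89 / (6 * (4 * s - 52)) = -(89 / (6 * (52 - 4 * s))) := by
    rw [show (6:ℝ) * (4 * s - 52) = -(6 * (52 - 4 * s)) by ring, div_neg]
  have e2 : 115 / (4 * s - 52) = -(115 / (52 - 4 * s)) := by
    rw [show 4 * s - 52 = -(52 - 4 * s) by ring, div_neg]
  have p1 : (0:ℝ) < 6 * (52 - 4 * s) := by linarith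
  have p2 : (0:ℝ) < 52 - 4 * s := by linarith
  have q1 : (5/6 - 0.4271 : ℝ) ≤ 89 / (6 * (52 - 4 * s)) := by
    rw [le_div_iff₀ p1]; nlinarith
  have q2 : (6 - 2.8501 : ℝ) ≤ 115 / (52 - 4 * s) := by
    rw [le_div_iff₀ p2]; nlinarith
  refine ⟨?_, by linarith, by linarith⟩
  rw [key]
  have hc2 : (26:ℝ) - 2 * s ≠ 0 := ne_of_gt hc
  have heq : (89 / (6 * (4 * s - 52)) + 5 / 6) * (γ : ℝ) + (115 / (4 * s - 52) + 6)
      - ((k:ℝ) + ((γ:ℝ) - 1 - 19 * (k:ℝ)) / (2 * (26 - 2 * s)))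
      = (33 - 4 * s) * (5 * (γ:ℝ) + 36 - 6 * (k:ℝ)) / (12 * (26 - 2 * s)) := by
    rw [show (4:ℝ) * s - 52 = -2 * (26 - 2 * s) by ring, show (33:ℝ) - 4 * s = 2 * (26 - 2 * s) - 19 by ring]
    generalize 26 - 2 * s = c at hc2 ⊢
    field_simp
    ring
  have hnn : (0:ℝ) ≤ (33 - 4 * s) * (5 * (γ:ℝ) + 36 - 6 * (k:ℝ)) / (12 * (26 - 2 * s)) := by
    apply div_nonneg
    · apply mul_nonneg <;> linarith
    · linarith
  linarith [heq, hnn]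
end

section
/- The limsup as γ → ∞ (over positive integers γ) of F₅(γ)/(8πγ) is at most 5/6 − 89/(6·(52 − 4√15)). -/
open Real

open Filter

lemma d_lb (γ : ℤ) : 5 * (γ:ℝ) / 6 + 5 ≤ ((d 5 γ : ℤ) : ℝ) := by
  have h := Int.le_ceil ((5:ℚ) * (γ:ℚ) / ((5:ℚ) + 1))
  have h' : (5:ℝ) * (γ:ℝ) / 6 ≤ ((⌈(5:ℚ) * (γ:ℚ) / ((5:ℚ)+1)⌉ : ℤ) : ℝ) := by
    have := (Rat.cast_le (K := ℝ)).2 h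
    push_cast at this ⊢
    linarith
  unfold d
  push_cast
  linarith

lemma d_ub (γ : ℤ) : ((d 5 γ : ℤ) : ℝ) ≤ 5 * (γ:ℝ) / 6 + 6 := by
  have h := (Int.ceil_lt_add_one ((5:ℚ) * (γ:ℚ) / ((5:ℚ) + 1))).le
  have h' : ((⌈(5:ℚ) * (γ:ℚ) / ((5:ℚ)+1)⌉ : ℤ) : ℝ) ≤ (5:ℝ) * (γ:ℝ) / 6 + 1 := by
    have := (Rat.cast_le (K := ℝ)).2 h
    push_cast at this ⊢
    linarith
  unfold d
  push_cast
  linarith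

lemma hU : Tendsto (fun γ : ℤ => ((d 5 γ : ℤ) : ℝ) / (γ:ℝ)) atTop (nhds (5/6)) := by
  have hcast : Tendsto (fun γ : ℤ => (γ:ℝ)) atTop atTop := tendsto_intCast_atTop_atTop
  have hinv : Tendsto (fun γ : ℤ => ((γ:ℝ))⁻¹) atTop (nhds 0) :=
    (tendsto_inv_atTop_zero).comp hcast
  have hub : Tendsto (fun γ : ℤ => 5/6 + 6 * ((γ:ℝ))⁻¹) atTop (nhds (5/6)) := by
    have := (hinv.const_mul (6:ℝ)).const_add (5/6 : ℝ)
    simpa using this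
  refine tendsto_of_tendsto_of_tendsto_of_le_of_le' tendsto_const_nhds hub ?_ ?_
  · filter_upwards [eventually_ge_atTop (1:ℤ)] with γ hγ
    have hγR : (1:ℝ) ≤ (γ:ℝ) := by exact_mod_cast hγ
    have hpos : (0:ℝ) < (γ:ℝ) := by linarith
    rw [le_div_iff₀ hpos]
    have := d_lb γ
    nlinarith
  · filter_upwards [eventually_ge_atTop (1:ℤ)] with γ hγ
    have hγR : (1:ℝ) ≤ (γ:ℝ) := by exact_mod_cast hγ
    have hpos : (0:ℝ) < (γ:ℝ) := by linarith
    rw [div_le_iff₀ hpos]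
    have := d_ub γ
    have h6 : 6 * ((γ:ℝ))⁻¹ * (γ:ℝ) = 6 := by field_simp
    nlinarith

lemma hV : Tendsto (fun γ : ℤ => ((γ:ℝ) - 1) / ((d 5 γ : ℤ) : ℝ)) atTop (nhds (6/5)) := by
  have hcast : Tendsto (fun γ : ℤ => (γ:ℝ)) atTop atTop := tendsto_intCast_atTop_atTop
  have hinv : Tendsto (fun γ : ℤ => ((γ:ℝ))⁻¹) atTop (nhds 0) :=
    (tendsto_inv_atTop_zero).comp hcast
  have h1 : Tendsto (fun γ : ℤ => 1 - ((γ:ℝ))⁻¹) atTop (nhds 1) := by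
    have := (tendsto_const_nhds (x := (1:ℝ)) (f := atTop (α := ℤ))).sub hinv
    simpa using this
  have h2 : Tendsto (fun γ : ℤ => (1 - ((γ:ℝ))⁻¹) / (((d 5 γ : ℤ) : ℝ) / (γ:ℝ)))
      atTop (nhds (1 / (5/6))) := h1.div hU (by norm_num)
  have heq : ∀ᶠ γ : ℤ in atTop,
      (1 - ((γ:ℝ))⁻¹) / (((d 5 γ : ℤ) : ℝ) / (γ:ℝ)) = ((γ:ℝ) - 1) / ((d 5 γ : ℤ) : ℝ) := by
    filter_upwards [eventually_ge_atTop (1:ℤ)] with γ hγ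
    have hγR : (1:ℝ) ≤ (γ:ℝ) := by exact_mod_cast hγ
    have hpos : (0:ℝ) < (γ:ℝ) := by linarith
    have hd : (0:ℝ) < ((d 5 γ : ℤ) : ℝ) := by have := d_lb γ; linarith
    field_simp
  have h3 := h2.congr' heq
  norm_num at h3
  exact h3

lemma main_tendsto : Tendsto (fun γ : ℤ => F₅ γ / (8 * π * (γ : ℝ))) atTop
    (nhds ((5/6) * (1 + (2*(1/Real.sqrt 60)^2*(1 + 6/5) - 2/3)/((2*(1/Real.sqrt 60)-1)^2 + 2/3)))) := by
  set a : ℝ := 1 / Real.sqrt 60 with ha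
  set K : ℝ := (2*a-1)^2 + 2/3 with hK
  have hlim : Tendsto (fun γ : ℤ => (((d 5 γ : ℤ) : ℝ) / (γ:ℝ)) *
      (1 + (2*a^2*(1 + ((γ:ℝ) - 1) / ((d 5 γ : ℤ) : ℝ)) - 2/3)/K)) atTop
      (nhds ((5/6) * (1 + (2*a^2*(1 + 6/5) - 2/3)/K))) := by
    refine hU.mul ?_
    have := ((((hV.const_add (1:ℝ)).const_mul (2*a^2)).sub_const (2/3:ℝ)).div_const K).const_add (1:ℝ)
    simpa using this
  refine hlim.congr' ?_
  filter_upwards [eventually_ge_atTop (1:ℤ)] with γ hγ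
  have hγR : (1:ℝ) ≤ (γ:ℝ) := by exact_mod_cast hγ
  have hpos : (0:ℝ) < (γ:ℝ) := by linarith
  have hπ : (0:ℝ) < π := Real.pi_pos
  have hKpos : (0:ℝ) < K := by positivity
  unfold F₅ F δ
  rw [← ha]
  have h5 : (((5:ℤ):ℝ) - 1) / (((5:ℤ):ℝ) + 1) = 2/3 := by norm_num
  rw [h5, ← hK]
  field_simp

lemma sqrt60 : Real.sqrt 60 = 2 * Real.sqrt 15 := by
  rw [show (60:ℝ) = 2^2 * 15 by norm_num, Real.sqrt_mul (by positivity), Real.sqrt_sq (by norm_num)]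

lemma algebra_id :
    (5/6 : ℝ) * (1 + (2*(1/Real.sqrt 60)^2*(1 + 6/5) - 2/3)/((2*(1/Real.sqrt 60)-1)^2 + 2/3))
      = 5 / 6 - 89 / (6 * (52 - 4 * Real.sqrt 15)) := by
  rw [sqrt60]
  set s : ℝ := Real.sqrt 15 with hs'
  have hs : s^2 = 15 := Real.sq_sqrt (by norm_num)
  have hs0 : (0:ℝ) < s := Real.sqrt_pos.2 (by norm_num)
  have hs4 : s < 4 := by nlinarith
  have hK : (2*(1/(2*s))-1)^2 + 2/3 = (26 - 2*s)/15 := by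
    field_simp
    nlinarith
  rw [hK]
  have h1 : (26:ℝ) - 2*s ≠ 0 := by nlinarith
  have h2 : (52:ℝ) - 4*s ≠ 0 := by nlinarith
  have h2' : (52:ℝ) - s*4 ≠ 0 := by nlinarith
  field_simp
  nlinarith

theorem stmt_3 :
    Filter.limsup (fun γ : ℤ => F₅ γ / (8 * π * (γ : ℝ))) Filter.atTop ≤
      5 / 6 - 89 / (6 * (52 - 4 * Real.sqrt 15)) := by
  have h := main_tendsto.limsup_eq
  rw [h, algebra_id]
end

section
/- Fix integers n ≥ 2 and γ ≥ 0. The function a ↦ F(a,n,γ) on ℝ has a local minimum at a = a_min(n,γ) and a local maximum at a = a_max(n,γ), and its derivative vanishes at a real point a if and only if a = a_min(n,γ) or a = a_max(n,γ). -/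
open Real

lemma d_ge (n γ : ℤ) (hn : 2 ≤ n) (hγ : 0 ≤ γ) : 2 ≤ d n γ := by
  have hq : (0:ℚ) ≤ (n : ℚ) * (γ : ℚ) / ((n : ℚ) + 1) := by
    have h1 : (0:ℚ) ≤ (n:ℚ) := by exact_mod_cast (by linarith : (0:ℤ) ≤ n)
    have h2 : (0:ℚ) ≤ (γ:ℚ) := by exact_mod_cast hγ
    positivity
  have := Int.ceil_nonneg hq
  unfold d
  omega

lemma δ_pos (n γ : ℤ) (hn : 2 ≤ n) (hγ : 0 ≤ γ) : 0 < δ n γ := by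
  have hd2 : (2:ℝ) ≤ ((d n γ : ℤ) : ℝ) := by exact_mod_cast d_ge n γ hn hγ
  have hd0 : (0:ℝ) < ((d n γ : ℤ) : ℝ) := by linarith
  have hγℝ : (0:ℝ) ≤ (γ:ℝ) := by exact_mod_cast hγ
  have h1 : (-1:ℝ) * ((d n γ : ℤ) : ℝ) < (γ:ℝ) - 1 := by nlinarith
  have h2 : (-1:ℝ) < ((γ:ℝ) - 1) / ((d n γ : ℤ) : ℝ) := (lt_div_iff₀ hd0).mpr h1
  unfold δ
  linarith

lemma disc_pos (n γ : ℤ) (hn : 2 ≤ n) (hγ : 0 ≤ γ) :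
    0 < ξ n γ ^ 2 - 2 * ((n : ℝ) ^ 2 - 1) * δ n γ := by
  have hδ := δ_pos n γ hn hγ
  have hn2 : (2:ℝ) ≤ (n:ℝ) := by exact_mod_cast hn
  unfold ξ
  nlinarith [sq_nonneg ((n:ℝ)^2 * δ n γ - ((n:ℝ) - 1)), sq_nonneg ((n:ℝ) - 1)]

theorem stmt_4 (n γ : ℤ) (hn : 2 ≤ n) (hγ : 0 ≤ γ) :
    IsLocalMin (fun a : ℝ => F a n γ) (aMin n γ) ∧
    IsLocalMax (fun a : ℝ => F a n γ) (aMax n γ) ∧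
    ∀ a : ℝ, deriv (fun a : ℝ => F a n γ) a = 0 ↔ a = aMin n γ ∨ a = aMax n γ := by
  have hδ := δ_pos n γ hn hγ
  have hΔ := disc_pos n γ hn hγ
  have hn2 : (2:ℝ) ≤ (n:ℝ) := by exact_mod_cast hn
  have hn1 : (0:ℝ) < (n:ℝ) + 1 := by linarith
  have hd2 : (2:ℝ) ≤ ((d n γ : ℤ) : ℝ) := by exact_mod_cast d_ge n γ hn hγ
  set k : ℝ := ((n:ℝ) - 1) / ((n:ℝ) + 1) with hk_def
  have hk : 0 < k := div_pos (by linarith) hn1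
  set s : ℝ := Real.sqrt (ξ n γ ^ 2 - 2 * ((n : ℝ) ^ 2 - 1) * δ n γ) with hs_def
  have hs2 : s ^ 2 = ξ n γ ^ 2 - 2 * ((n : ℝ) ^ 2 - 1) * δ n γ := Real.sq_sqrt hΔ.le
  have hspos : 0 < s := Real.sqrt_pos.mpr hΔ
  have hden : (0:ℝ) < 2 * δ n γ * ((n:ℝ) + 1) := by positivity
  have hlt : aMin n γ < aMax n γ := by
    rw [aMin, aMax, ← hs_def, div_lt_div_iff₀ hden hden]
    nlinarith
  have hsum : aMin n γ + aMax n γ = ξ n γ / (δ n γ * ((n:ℝ) + 1)) := by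
    rw [aMin, aMax, ← hs_def]
    field_simp
    ring
  have hprod : aMin n γ * aMax n γ = k / (2 * δ n γ) := by
    rw [aMin, aMax, ← hs_def, div_mul_div_comm, hk_def]
    have h1 : (ξ n γ - s) * (ξ n γ + s) = 2 * ((n:ℝ)^2 - 1) * δ n γ := by
      linear_combination -hs2
    rw [h1]
    field_simp
    ring
  have hfac : ∀ a : ℝ, (a - aMin n γ) * (a - aMax n γ)
      = a^2 - (ξ n γ / (δ n γ * ((n:ℝ) + 1))) * a + k / (2 * δ n γ) := by
    intro a; rw [← hsum, ← hprod]; ring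
  -- the key numerator identity
  have key : ∀ a : ℝ, 4 * a * δ n γ * ((2*a-1)^2 + k) - (2*a^2*δ n γ - k) * (2*(2*a-1)*2)
      = -8 * δ n γ * ((a - aMin n γ) * (a - aMax n γ)) := by
    intro a
    rw [hfac a, hk_def, ξ]
    field_simp
    ring
  have hD : ∀ a : ℝ, (0:ℝ) < (2*a-1)^2 + k := fun a => by positivity
  have hder : ∀ a : ℝ, HasDerivAt (fun a : ℝ => F a n γ)
      (8 * π * ((d n γ : ℤ) : ℝ) *
        (-8 * δ n γ * ((a - aMin n γ) * (a - aMax n γ)) / ((2*a-1)^2 + k)^2)) a := by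
    intro a
    have h1 : HasDerivAt (fun x : ℝ => 2*x^2*δ n γ - k) (4*a*δ n γ) a := by
      have := (((hasDerivAt_pow 2 a).const_mul 2).mul_const (δ n γ)).sub_const k
      refine this.congr_deriv ?_
      push_cast; ring
    have h2 : HasDerivAt (fun x : ℝ => (2*x-1)^2 + k) (2*(2*a-1)*2) a := by
      have := ((((hasDerivAt_id a).const_mul 2).sub_const 1).pow 2).add_const k
      refine this.congr_deriv ?_
      simp only [id_eq]; push_cast; ring
    have h3 := (h1.div h2 (hD a).ne')
    have h4 := (h3.const_add 1).const_mul (8 * π * ((d n γ : ℤ) : ℝ))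
    have hfun : (fun a : ℝ => F a n γ)
        = fun x : ℝ => 8 * π * ((d n γ : ℤ) : ℝ) * (1 + (2*x^2*δ n γ - k) / ((2*x-1)^2 + k)) := by
      funext x; rw [F, hk_def]
    rw [hfun]
    rw [← key a]
    exact h4
  have hderiv : ∀ a : ℝ, deriv (fun a : ℝ => F a n γ) a
      = 8 * π * ((d n γ : ℤ) : ℝ) *
        (-8 * δ n γ * ((a - aMin n γ) * (a - aMax n γ)) / ((2*a-1)^2 + k)^2) :=
    fun a => (hder a).deriv
  have hC : (0:ℝ) < 8 * π * ((d n γ : ℤ) : ℝ) := by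
    have := Real.pi_pos; positivity
  have hdiffOn : ∀ s : Set ℝ, DifferentiableOn ℝ (fun a : ℝ => F a n γ) s :=
    fun s x _ => (hder x).differentiableAt.differentiableWithinAt
  -- sign lemmas
  have signneg : ∀ x : ℝ, 0 ≤ (x - aMin n γ) * (x - aMax n γ) →
      deriv (fun a : ℝ => F a n γ) x ≤ 0 := by
    intro x hx
    rw [hderiv x]
    have hnum : -8 * δ n γ * ((x - aMin n γ) * (x - aMax n γ)) ≤ 0 := by nlinarith
    have hQ : (0:ℝ) ≤ ((2*x-1)^2 + k)^2 := by positivity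
    exact mul_nonpos_of_nonneg_of_nonpos hC.le (div_nonpos_of_nonpos_of_nonneg hnum hQ)
  have signpos : ∀ x : ℝ, (x - aMin n γ) * (x - aMax n γ) ≤ 0 →
      0 ≤ deriv (fun a : ℝ => F a n γ) x := by
    intro x hx
    rw [hderiv x]
    have hnum : 0 ≤ -8 * δ n γ * ((x - aMin n γ) * (x - aMax n γ)) := by nlinarith
    have hQ : (0:ℝ) ≤ ((2*x-1)^2 + k)^2 := by positivity
    exact mul_nonneg hC.le (div_nonneg hnum hQ)
  refine ⟨?_, ?_, ?_⟩
  · exact isLocalMin_of_deriv_Ioo (by linarith : aMin n γ - 1 < aMin n γ) hlt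
      (hder _).differentiableAt.continuousAt (hdiffOn _) (hdiffOn _)
      (fun x hx => signneg x (by nlinarith [hx.1, hx.2]))
      (fun x hx => signpos x (by nlinarith [hx.1, hx.2]))
  · exact isLocalMax_of_deriv_Ioo hlt (by linarith : aMax n γ < aMax n γ + 1)
      (hder _).differentiableAt.continuousAt (hdiffOn _) (hdiffOn _)
      (fun x hx => signpos x (by nlinarith [hx.1, hx.2]))
      (fun x hx => signneg x (by nlinarith [hx.1, hx.2]))
  · intro a
    rw [hderiv a]
    constructor
    · intro h
      rcases mul_eq_zero.mp h with h1 | h1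
      · exact absurd h1 hC.ne'
      rcases div_eq_zero_iff.mp h1 with h2 | h2
      · rcases mul_eq_zero.mp h2 with h3 | h3
        · exact absurd h3 (by nlinarith)
        · rcases mul_eq_zero.mp h3 with h4 | h4
          · exact Or.inl (sub_eq_zero.mp h4)
          · exact Or.inr (sub_eq_zero.mp h4)
      · exact absurd h2 (by positivity)
    · rintro (rfl | rfl) <;> simp
end

section
/- For all integers n ≥ 2 and γ ≥ 0 one has a_max(n,γ) > 1/√(2n(n+1)). -/
open Real

theorem stmt_5 (n γ : ℤ) (hn : 2 ≤ n) (hγ : 0 ≤ γ) :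
    aMax n γ > 1 / Real.sqrt (2 * (n : ℝ) * ((n : ℝ) + 1)) := by
  have hn' : (2:ℝ) ≤ (n:ℝ) := by exact_mod_cast hn
  have hγ' : (0:ℝ) ≤ (γ:ℝ) := by exact_mod_cast hγ
  have hceil : 0 ≤ ⌈(n : ℚ) * (γ : ℚ) / ((n : ℚ) + 1)⌉ := by
    apply Int.ceil_nonneg
    have h1 : (0:ℚ) ≤ (n:ℚ) := by exact_mod_cast (by omega : (0:ℤ) ≤ n)
    have h2 : (0:ℚ) ≤ (γ:ℚ) := by exact_mod_cast hγ
    positivity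
  have hdZ : 2 ≤ d n γ := by unfold d; omega
  have hd : (2:ℝ) ≤ ((d n γ : ℤ) : ℝ) := by exact_mod_cast hdZ
  have hd0 : (0:ℝ) < ((d n γ : ℤ) : ℝ) := by linarith
  have hfrac : -(1:ℝ)/2 ≤ ((γ:ℝ) - 1) / ((d n γ : ℤ) : ℝ) := by
    rw [div_le_div_iff₀ (by norm_num) hd0]
    nlinarith
  have hδ : (1:ℝ)/2 ≤ δ n γ := by unfold δ; linarith
  have hδ0 : (0:ℝ) < δ n γ := by linarith
  have hden : (0:ℝ) < 2 * δ n γ * ((n:ℝ) + 1) := by positivity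
  have hξ : ξ n γ = (n : ℝ) * δ n γ + ((n : ℝ) - 1) := rfl
  have hA : (1:ℝ)/3 ≤ ξ n γ / (2 * δ n γ * ((n:ℝ) + 1)) := by
    rw [le_div_iff₀ hden, hξ]
    nlinarith [mul_nonneg (by linarith : (0:ℝ) ≤ (n:ℝ) - 2) hδ0.le]
  have hB : ξ n γ / (2 * δ n γ * ((n:ℝ) + 1)) ≤ aMax n γ := by
    unfold aMax
    gcongr
    · linarith [Real.sqrt_nonneg (ξ n γ ^ 2 - 2 * ((n : ℝ) ^ 2 - 1) * δ n γ)]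
  have hC : Real.sqrt (2 * (n : ℝ) * ((n : ℝ) + 1)) > 3 := by
    rw [show (3:ℝ) = Real.sqrt 9 by
      rw [show (9:ℝ) = 3^2 by norm_num, Real.sqrt_sq (by norm_num)]]
    apply Real.sqrt_lt_sqrt (by norm_num)
    nlinarith
  have hC' : 1 / Real.sqrt (2 * (n : ℝ) * ((n : ℝ) + 1)) < 1/3 :=
    one_div_lt_one_div_of_lt (by norm_num) hC
  linarith
end

section
/- For all integers n ≥ 2 and γ ≥ 0, the inequality a_min(n,γ) < 1/√(2n(n+1)) holds if and only if √n·(n−1)·(√(n(n+1)) − √2)/(n·√(2n) − √(n+1)) < δ(n,γ). -/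
set_option maxHeartbeats 800000


open Real

theorem stmt_6 (n γ : ℤ) (hn : 2 ≤ n) (hγ : 0 ≤ γ) :
    aMin n γ < 1 / Real.sqrt (2 * (n : ℝ) * ((n : ℝ) + 1)) ↔
      Real.sqrt (n : ℝ) * ((n : ℝ) - 1) *
          (Real.sqrt ((n : ℝ) * ((n : ℝ) + 1)) - Real.sqrt 2) /
          ((n : ℝ) * Real.sqrt (2 * (n : ℝ)) - Real.sqrt ((n : ℝ) + 1)) <
        δ n γ := by
  have hn2 : (2:ℝ) ≤ (n:ℝ) := by exact_mod_cast hn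
  -- δ ≥ 1/2
  have hdz : (n:ℤ) ≤ d n γ := by
    have hceil : (0:ℤ) ≤ ⌈(n : ℚ) * (γ : ℚ) / ((n : ℚ) + 1)⌉ := by
      apply Int.ceil_nonneg
      apply div_nonneg
      · apply mul_nonneg
        · exact_mod_cast (by linarith : (0:ℤ) ≤ n)
        · exact_mod_cast hγ
      · have : (0:ℚ) ≤ (n:ℚ) := by exact_mod_cast (by linarith : (0:ℤ) ≤ n)
        linarith
    simp only [d]; linarith
  have hd2 : (2:ℝ) ≤ ((d n γ : ℤ):ℝ) := by exact_mod_cast le_trans hn hdz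
  have hdpos : (0:ℝ) < ((d n γ : ℤ):ℝ) := by linarith
  have hδ : (1:ℝ)/2 ≤ δ n γ := by
    have hg : (-1:ℝ) ≤ (γ:ℝ) - 1 := by
      have : (0:ℝ) ≤ (γ:ℝ) := by exact_mod_cast hγ
      linarith
    have hq : -(1/2 : ℝ) ≤ ((γ:ℝ) - 1) / ((d n γ : ℤ):ℝ) := by
      rw [le_div_iff₀ hdpos]; nlinarith
    simp only [δ]; linarith
  set N : ℝ := (n:ℝ) with hNdef
  set δ₀ : ℝ := δ n γ with hδ₀def
  have hδpos : 0 < δ₀ := by linarith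
  set p : ℝ := Real.sqrt N with hpdef
  set q : ℝ := Real.sqrt (N+1) with hqdef
  set r : ℝ := Real.sqrt 2 with hrdef
  set s : ℝ := Real.sqrt (2*N*(N+1)) with hsdef
  have hNpos : (0:ℝ) < N := by linarith
  have hp : p^2 = N := Real.sq_sqrt (by linarith)
  have hq2 : q^2 = N + 1 := Real.sq_sqrt (by linarith)
  have hr : r^2 = 2 := Real.sq_sqrt (by norm_num)
  have hs2 : s^2 = 2*N*(N+1) := Real.sq_sqrt (by nlinarith)
  have hppos : 0 < p := Real.sqrt_pos.mpr (by linarith)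
  have hqpos : 0 < q := Real.sqrt_pos.mpr (by linarith)
  have hrpos : 0 < r := Real.sqrt_pos.mpr (by norm_num)
  have hspos : 0 < s := Real.sqrt_pos.mpr (by nlinarith)
  have hs3 : r * p * q = s := by
    rw [hsdef, hpdef, hqdef, hrdef,
      show 2*N*(N+1) = (2*N)*(N+1) by ring,
      Real.sqrt_mul (by linarith : (0:ℝ) ≤ 2*N),
      Real.sqrt_mul (by norm_num : (0:ℝ) ≤ 2)]
  have hsqrt1 : Real.sqrt (2*N) = r*p := by
    rw [hpdef, hrdef, Real.sqrt_mul (by norm_num : (0:ℝ) ≤ 2)]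
  have hsqrt2 : Real.sqrt (N*(N+1)) = p*q := by
    rw [hpdef, hqdef, Real.sqrt_mul (by linarith : (0:ℝ) ≤ N)]
  have hξ : ξ n γ = N * δ₀ + (N - 1) := rfl
  set D₀ : ℝ := ξ n γ ^ 2 - 2 * (N ^ 2 - 1) * δ₀ with hDdef
  have hD : 0 < D₀ := by
    rw [hDdef, hξ]
    nlinarith [sq_nonneg (2*δ₀ - (N-1)), mul_nonneg (by nlinarith : (0:ℝ) ≤ N^2-4) (sq_nonneg δ₀)]
  -- positivity facts
  have hc₁ : 0 < N*s - (N+1) := by nlinarith [hs2, hspos]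
  have hc₂ : 0 < 2*N^2 - s := by nlinarith [hs2, hspos]
  have hB : 0 < N*(r*p) - q := by
    have e : (N*(r*p))^2 = 2*N^3 := by
      have : (N*(r*p))^2 = N^2*r^2*p^2 := by ring
      rw [this, hp, hr]; ring
    have hlt : q^2 < (N*(r*p))^2 := by rw [e, hq2]; nlinarith
    have := lt_of_pow_lt_pow_left₀ 2 (by positivity : (0:ℝ) ≤ N*(r*p)) hlt
    linarith
  have hL : 0 ≤ s * ξ n γ - 2*δ₀*(N+1) := by
    have hsN : 2*(N+1) ≤ s*N := by nlinarith [hs2, hspos]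
    rw [hξ]; nlinarith [mul_pos hspos (by linarith : (0:ℝ) < N - 1)]
  have hden : 0 < 2 * δ₀ * (N+1) := by positivity
  -- main chain
  have h1 : aMin n γ < 1/s ↔ (ξ n γ - Real.sqrt D₀) * s < 1 * (2 * δ₀ * (N+1)) := by
    rw [aMin]; exact div_lt_div_iff₀ hden hspos
  have h2 : (ξ n γ - Real.sqrt D₀) * s < 1 * (2 * δ₀ * (N+1)) ↔
      s * ξ n γ - 2*δ₀*(N+1) < s * Real.sqrt D₀ := by
    constructor <;> intro h <;> nlinarith [h]
  have h3 : s * ξ n γ - 2*δ₀*(N+1) < s * Real.sqrt D₀ ↔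
      (s * ξ n γ - 2*δ₀*(N+1))^2 < s^2 * D₀ := by
    have hsq : (s * Real.sqrt D₀)^2 = s^2 * D₀ := by
      rw [mul_pow, Real.sq_sqrt hD.le]
    have hrt : 0 ≤ s * Real.sqrt D₀ := mul_nonneg hspos.le (Real.sqrt_nonneg _)
    constructor <;> intro h
    · rw [← hsq]
      exact pow_lt_pow_left₀ h hL (by norm_num)
    · have h2 : (s * ξ n γ - 2*δ₀*(N+1))^2 < (s * Real.sqrt D₀)^2 := by
        rw [hsq]; exact h
      exact lt_of_pow_lt_pow_left₀ 2 hrt h2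
  have key : s^2 * D₀ - (s * ξ n γ - 2*δ₀*(N+1))^2
      = 4*δ₀*(N+1)*(δ₀*(N*s-(N+1)) - (N-1)*(N*(N+1)-s)) := by
    rw [hDdef, hξ]
    linear_combination (-2*(N^2-1)*δ₀) * hs2
  have h4 : (s * ξ n γ - 2*δ₀*(N+1))^2 < s^2 * D₀ ↔
      (N-1)*(N*(N+1)-s) < δ₀*(N*s-(N+1)) := by
    have hco : (0:ℝ) < 4*δ₀*(N+1) := by positivity
    constructor
    · intro h
      have h0 : 0 < 4*δ₀*(N+1)*(δ₀*(N*s-(N+1)) - (N-1)*(N*(N+1)-s)) := by linarith [key]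
      have := (mul_pos_iff_of_pos_left hco).mp h0
      linarith
    · intro h
      have h0 : 0 < 4*δ₀*(N+1)*(δ₀*(N*s-(N+1)) - (N-1)*(N*(N+1)-s)) :=
        (mul_pos_iff_of_pos_left hco).mpr (by linarith)
      linarith [key]
  have hcross : (2*N^2 - s)*((N-1)*(N*(N+1)-s)) = (N*s-(N+1))*(N*(N-1)*(s-2)) := by
    linear_combination ((N-1)*(1-N^2))*hs2
  have h5 : (N-1)*(N*(N+1)-s) < δ₀*(N*s-(N+1)) ↔
      N*(N-1)*(s-2) < δ₀*(2*N^2-s) := by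
    constructor
    · intro h
      have h0 := mul_lt_mul_of_pos_left h hc₂
      have h1 : (N*s-(N+1))*(N*(N-1)*(s-2)) < (N*s-(N+1))*(δ₀*(2*N^2-s)) := by
        calc (N*s-(N+1))*(N*(N-1)*(s-2)) = (2*N^2-s)*((N-1)*(N*(N+1)-s)) := hcross.symm
          _ < (2*N^2-s)*(δ₀*(N*s-(N+1))) := h0
          _ = (N*s-(N+1))*(δ₀*(2*N^2-s)) := by ring
      exact lt_of_mul_lt_mul_left h1 hc₁.le
    · intro h
      have h0 := mul_lt_mul_of_pos_left h hc₁
      have h1 : (2*N^2-s)*((N-1)*(N*(N+1)-s)) < (2*N^2-s)*(δ₀*(N*s-(N+1))) := by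
        calc (2*N^2-s)*((N-1)*(N*(N+1)-s)) = (N*s-(N+1))*(N*(N-1)*(s-2)) := hcross
          _ < (N*s-(N+1))*(δ₀*(2*N^2-s)) := h0
          _ = (2*N^2-s)*(δ₀*(N*s-(N+1))) := by ring
      exact lt_of_mul_lt_mul_left h1 hc₂.le
  have hA : (p*(N-1)*(p*q-r))*(r*p) = N*(N-1)*(s-2) := by
    linear_combination ((N-1)*(q*r*p) - (N-1)*r^2)*hp + (N-1)*N*hs3 - (N-1)*N*hr
  have hB' : (N*(r*p) - q)*(r*p) = 2*N^2 - s := by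
    linear_combination N*r^2*hp + N^2*hr - hs3
  have h6 : p*(N-1)*(p*q-r) / (N*(r*p) - q) < δ₀ ↔ N*(N-1)*(s-2) < δ₀*(2*N^2-s) := by
    rw [div_lt_iff₀ hB, ← hA, ← hB']
    constructor <;> intro h
    · calc p*(N-1)*(p*q-r)*(r*p) < δ₀*(N*(r*p)-q)*(r*p) := by
            exact mul_lt_mul_of_pos_right h (by positivity)
        _ = δ₀*((N*(r*p)-q)*(r*p)) := by ring
    · have h' : (p*(N-1)*(p*q-r))*(r*p) < (δ₀*(N*(r*p)-q))*(r*p) := by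
        calc (p*(N-1)*(p*q-r))*(r*p) < δ₀*((N*(r*p)-q)*(r*p)) := h
          _ = (δ₀*(N*(r*p)-q))*(r*p) := by ring
      exact lt_of_mul_lt_mul_right h' (by positivity)
  rw [hsqrt1, hsqrt2]
  exact (((h1.trans h2).trans h3).trans (h4.trans h5)).trans h6.symm
end

section
/- For all integers n ≥ 5 and γ ≥ 0 one has a_min(n,γ) > 1/√(2n(n+1)). -/
open Real

set_option maxHeartbeats 1000000 in
theorem stmt_7 (n γ : ℤ) (hn : 5 ≤ n) (hγ : 0 ≤ γ) :
    aMin n γ > 1 / Real.sqrt (2 * (n : ℝ) * ((n : ℝ) + 1)) := by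
  have hN : (5:ℝ) ≤ (n:ℝ) := by exact_mod_cast hn
  have hG : (0:ℝ) ≤ (γ:ℝ) := by exact_mod_cast hγ
  set N : ℝ := (n : ℝ) with hNdef
  set Dd : ℝ := ((d n γ : ℤ) : ℝ) with hDddef
  -- bounds on d
  have hdn : (n : ℤ) ≤ d n γ := by
    have h0 : (0:ℚ) ≤ (n : ℚ) * (γ : ℚ) / ((n : ℚ) + 1) := by
      have h1 : (0:ℚ) ≤ (n:ℚ) := by exact_mod_cast (by omega : (0:ℤ) ≤ n)
      have h2 : (0:ℚ) ≤ (γ:ℚ) := by exact_mod_cast hγ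
      positivity
    have := Int.ceil_nonneg h0
    unfold d; omega
  have hDdN : N ≤ Dd := by rw [hDddef, hNdef]; exact_mod_cast hdn
  have hNpos : (0:ℝ) < N := by linarith
  have hDdpos : (0:ℝ) < Dd := by linarith
  -- ceiling lower bound: (N+1)*Dd ≥ N*G + N*(N+1)
  have hceil : N * (γ:ℝ) + N * (N+1) ≤ (N+1) * Dd := by
    have hq : ((n:ℚ) * (γ:ℚ) / ((n:ℚ) + 1)) ≤ ((⌈(n : ℚ) * (γ : ℚ) / ((n : ℚ) + 1)⌉ : ℤ) : ℚ) :=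
      Int.le_ceil _
    have hnq : (0:ℚ) < (n:ℚ) + 1 := by
      have : (5:ℚ) ≤ (n:ℚ) := by exact_mod_cast hn
      linarith
    rw [div_le_iff₀ hnq] at hq
    have h2 : (n:ℚ) * (γ:ℚ) + (n:ℚ) * ((n:ℚ)+1) ≤ ((n:ℚ)+1) * ((d n γ : ℤ) : ℚ) := by
      unfold d
      push_cast
      nlinarith [hq]
    rw [hNdef, hDddef]
    exact_mod_cast h2
  set D : ℝ := δ n γ with hDdef
  have hDeq : D = 1 + ((γ:ℝ) - 1) / Dd := rfl
  -- lower bound on D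
  have hD1 : 1 - 1/N ≤ D := by
    have h1 : (-1:ℝ)/Dd ≤ ((γ:ℝ)-1)/Dd := by gcongr <;> linarith
    have h2 : 1/Dd ≤ 1/N := one_div_le_one_div_of_le hNpos hDdN
    have h3 : (-1:ℝ)/Dd = -(1/Dd) := by ring
    rw [hDeq]; linarith
  have hDpos : (0:ℝ) < D := by
    have : 1/N ≤ 1/5 := by
      apply one_div_le_one_div_of_le <;> linarith
    linarith
  -- upper bound : N*D ≤ 2N+1
  have hD2 : N * D ≤ 2*N + 1 := by
    have h3 : ((γ:ℝ)-1)/Dd ≤ (N+1)/N := by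
      rw [div_le_div_iff₀ hDdpos hNpos]
      nlinarith [hceil]
    have h4 : D ≤ 1 + (N+1)/N := by rw [hDeq]; linarith
    have h5 : N * ((N+1)/N) = N+1 := by field_simp
    nlinarith [h4]
  -- ξ
  have hXieq : ξ n γ = N * D + (N - 1) := rfl
  have hXipos : 0 < ξ n γ := by rw [hXieq]; nlinarith
  -- the sqrt s
  set s : ℝ := Real.sqrt (2 * N * (N + 1)) with hsdef
  have hs2 : s^2 = 2 * N * (N+1) := Real.sq_sqrt (by nlinarith)
  have hspos : 0 < s := Real.sqrt_pos.2 (by nlinarith)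
  -- key polynomial inequality
  have hpoly : 2 * N * (N*D + N - 1)^2 < (N+1) * (N^2 - N + D)^2 := by
    nlinarith [mul_nonneg hDpos.le (by linarith : (0:ℝ) ≤ 2*N + 1 - N*D),
      sq_nonneg (N*D), sq_nonneg D, mul_pos hNpos hDpos, sq_nonneg (N - 5),
      mul_nonneg (mul_nonneg hNpos.le hNpos.le) hDpos.le]
  -- ξ * s < (N+1)*(N^2-N+D)
  have hxs : ξ n γ * s < (N+1) * (N^2 - N + D) := by
    have h1 : s < (N+1) * (N^2 - N + D) / ξ n γ := by
      rw [hsdef]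
      apply (Real.sqrt_lt' (div_pos (by nlinarith) hXipos)).2
      rw [div_pow, lt_div_iff₀ (by positivity)]
      have hmul := mul_lt_mul_of_pos_left hpoly (show (0:ℝ) < N+1 by linarith)
      rw [hXieq]
      nlinarith [hmul]
    calc ξ n γ * s < ξ n γ * ((N+1) * (N^2 - N + D) / ξ n γ) :=
          mul_lt_mul_of_pos_left h1 hXipos
      _ = (N+1) * (N^2 - N + D) := by field_simp
  -- X := ξ - D*s/N
  set X : ℝ := ξ n γ - D * s / N with hXdef
  have hsle : s ≤ 2 * N := by
    rw [hsdef]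
    have h : (2:ℝ) * N * (N+1) ≤ (2*N)^2 := by nlinarith
    calc Real.sqrt (2*N*(N+1)) ≤ Real.sqrt ((2*N)^2) := Real.sqrt_le_sqrt h
      _ = 2*N := Real.sqrt_sq (by linarith)
  have hXpos : 0 < X := by
    rw [hXdef, hXieq, sub_pos, div_lt_iff₀ hNpos]
    nlinarith [mul_le_mul_of_nonneg_left hsle hDpos.le]
  -- disc < X^2
  have hdisc : ξ n γ ^ 2 - 2 * (N^2 - 1) * D < X^2 := by
    have hX2 : X^2 = ξ n γ^2 - 2*ξ n γ*D*s/N + D^2*s^2/N^2 := by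
      rw [hXdef]; field_simp; ring
    rw [hX2, hs2]
    have key : 2*ξ n γ*D*s/N < 2*(N^2-1)*D + D^2*(2*N*(N+1))/N^2 := by
      rw [div_lt_iff₀ hNpos]
      have h8 : 2*D*(ξ n γ*s) < 2*D*((N+1)*(N^2-N+D)) :=
        mul_lt_mul_of_pos_left hxs (by positivity)
      have h6 : (2*(N^2-1)*D + D^2*(2*N*(N+1))/N^2) * N = 2*D*((N+1)*(N^2-N+D)) := by
        field_simp; ring
      rw [h6]
      nlinarith [h8]
    have hrw : D^2*(2*N*(N+1))/N^2 = D^2*(2*N*(N+1))/N^2 := rfl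
    linarith [key]
  -- sqrt disc < X
  have hsq : Real.sqrt (ξ n γ ^ 2 - 2 * (N^2 - 1) * D) < X :=
    (Real.sqrt_lt' hXpos).2 hdisc
  -- conclude
  have hden : (0:ℝ) < 2 * D * (N+1) := by positivity
  have h9 : (ξ n γ - X) / (2 * D * (N+1)) < aMin n γ := by
    unfold aMin
    gcongr
  have heq : (ξ n γ - X) / (2 * D * (N+1)) = 1 / s := by
    rw [hXdef]
    have : ξ n γ - (ξ n γ - D * s / N) = D * s / N := by ring
    rw [this, div_eq_div_iff hden.ne' hspos.ne']
    field_simp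
    nlinarith [hs2]
  rw [heq] at h9
  exact h9
end

section
/- One has a_min(n,γ) < 1/√(2n(n+1)) in each of the following cases: (a) n = 2 and γ ≥ 1; (b) n = 3 and γ ≥ 4; (c) n = 4 and γ ≥ 40. -/
open Real

-- auxiliary lemmas

lemma d_pos (n γ : ℤ) (hn : 1 ≤ n) (hγ : 0 ≤ γ) : 0 < d n γ := by
  have h1 : (0:ℚ) ≤ (n : ℚ) * (γ : ℚ) / ((n : ℚ) + 1) := by
    apply div_nonneg
    · positivity
    · have : (1:ℚ) ≤ (n:ℚ) := by exact_mod_cast hn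
      linarith
  have h2 : (0:ℤ) ≤ ⌈(n : ℚ) * (γ : ℚ) / ((n : ℚ) + 1)⌉ := Int.ceil_nonneg h1
  unfold d
  omega

lemma δ_ge_one (n γ : ℤ) (hn : 1 ≤ n) (hγ : 1 ≤ γ) : 1 ≤ δ n γ := by
  have hd := d_pos n γ hn (by omega)
  have hd' : (0:ℝ) < ((d n γ : ℤ) : ℝ) := by exact_mod_cast hd
  unfold δ
  have : (0:ℝ) ≤ ((γ : ℝ) - 1) / ((d n γ : ℤ) : ℝ) := by
    apply div_nonneg _ hd'.le
    have : (1:ℝ) ≤ (γ:ℝ) := by exact_mod_cast hγ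
    linarith
  linarith

lemma d_lt (n γ : ℤ) (hn : 1 ≤ n) :
    ((d n γ : ℤ) : ℝ) < (n:ℝ) * (γ:ℝ) / ((n:ℝ) + 1) + ((n:ℝ) + 1) := by
  have h : (⌈(n : ℚ) * (γ : ℚ) / ((n : ℚ) + 1)⌉ : ℚ) < (n : ℚ) * (γ : ℚ) / ((n : ℚ) + 1) + 1 :=
    Int.ceil_lt_add_one _
  have h' : ((⌈(n : ℚ) * (γ : ℚ) / ((n : ℚ) + 1)⌉ : ℤ) : ℝ) <
      (n:ℝ) * (γ:ℝ) / ((n:ℝ) + 1) + 1 := by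
    have := (Rat.cast_lt (K := ℝ)).2 h
    push_cast at this ⊢
    convert this using 2
  unfold d
  push_cast
  linarith

/-- the key reduction -/
lemma aMin_lt (n γ : ℤ) (hn : 2 ≤ n) (hδ1 : 1 ≤ δ n γ)
    (hkey : (n:ℝ) * ((n:ℝ) - 1) * (Real.sqrt (2*(n:ℝ)*((n:ℝ)+1)) - 2) <
      δ n γ * (2*(n:ℝ)^2 - Real.sqrt (2*(n:ℝ)*((n:ℝ)+1)))) :
    aMin n γ < 1 / Real.sqrt (2*(n:ℝ)*((n:ℝ)+1)) := by
  have hn2 : (2:ℝ) ≤ (n:ℝ) := by exact_mod_cast hn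
  set s := Real.sqrt (2*(n:ℝ)*((n:ℝ)+1)) with hs
  have hs2 : s^2 = 2*(n:ℝ)*((n:ℝ)+1) := Real.sq_sqrt (by nlinarith)
  have hs0 : 0 < s := Real.sqrt_pos.2 (by nlinarith)
  set e := δ n γ with he
  have he0 : (0:ℝ) < e := lt_of_lt_of_le one_pos hδ1
  have hξ : ξ n γ = (n:ℝ) * e + ((n:ℝ) - 1) := rfl
  set x := ξ n γ with hx
  -- n*s ≥ 2*(n+1)
  have hns : 2 * ((n:ℝ)+1) ≤ (n:ℝ) * s := by
    nlinarith [sq_nonneg ((n:ℝ)*s - 2*((n:ℝ)+1)), sq_nonneg ((n:ℝ)*s + 2*((n:ℝ)+1)), mul_pos (by linarith : (0:ℝ) < (n:ℝ)) hs0]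
  -- main consequence of hkey: x*s > (n+1)*e + n*(n^2-1)
  have hXi : ((n:ℝ)+1)*e + (n:ℝ)*((n:ℝ)^2-1) < x * s := by
    have h := mul_lt_mul_of_pos_right hkey hs0
    rw [hξ]
    nlinarith [h, hs2]
  set A := x ^ 2 - 2 * ((n : ℝ) ^ 2 - 1) * e with hA
  have hLnum : 0 ≤ x * s - 2 * e * ((n:ℝ)+1) := by
    have h1 : (n:ℝ) * e * s ≤ x * s := by
      rw [hξ]; nlinarith
    nlinarith [mul_le_mul_of_nonneg_left hns he0.le]
  have hsq : (x * s - 2 * e * ((n:ℝ)+1))^2 < A * s^2 := by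
    rw [hA, hs2]
    nlinarith [mul_pos (mul_pos he0 (show (0:ℝ) < (n:ℝ)+1 by linarith)) (sub_pos.2 hXi)]
  set L := (x * s - 2 * e * ((n:ℝ)+1)) / s with hL
  have hL0 : 0 ≤ L := div_nonneg hLnum hs0.le
  have hLA : L < Real.sqrt A := by
    rw [show L = (x * s - 2 * e * ((n:ℝ)+1)) / s from rfl]
    apply (Real.lt_sqrt hL0).2
    rw [div_pow]
    rw [div_lt_iff₀ (by positivity)]
    linarith [hsq]
  have hpos : (0:ℝ) < 2 * e * ((n:ℝ)+1) := by positivity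
  have haMin : aMin n γ = (x - Real.sqrt A) / (2 * e * ((n:ℝ)+1)) := rfl
  rw [haMin]
  calc (x - Real.sqrt A) / (2 * e * ((n:ℝ)+1)) < (x - L) / (2 * e * ((n:ℝ)+1)) := by
        gcongr

    _ = 1 / s := by
        rw [hL]
        field_simp
        ring

theorem stmt_8 :
    (∀ γ : ℤ, 1 ≤ γ →
        aMin 2 γ < 1 / Real.sqrt (2 * (2 : ℝ) * ((2 : ℝ) + 1))) ∧
    (∀ γ : ℤ, 4 ≤ γ →
        aMin 3 γ < 1 / Real.sqrt (2 * (3 : ℝ) * ((3 : ℝ) + 1))) ∧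
    (∀ γ : ℤ, 40 ≤ γ →
        aMin 4 γ < 1 / Real.sqrt (2 * (4 : ℝ) * ((4 : ℝ) + 1))) := by
  refine ⟨?_, ?_, ?_⟩
  · -- n = 2
    intro γ hγ
    have hδ1 : 1 ≤ δ 2 γ := δ_ge_one 2 γ (by norm_num) hγ
    have h := aMin_lt 2 γ (by norm_num) hδ1 ?_
    · convert h using 4 <;> push_cast <;> ring
    · push_cast
      have hs : Real.sqrt (2*(2:ℝ)*((2:ℝ)+1)) < 4 := by
        rw [show (2*(2:ℝ)*((2:ℝ)+1)) = 12 by norm_num]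
        exact (Real.sqrt_lt' (by norm_num)).2 (by norm_num)
      have hs0 := Real.sqrt_nonneg (2*(2:ℝ)*((2:ℝ)+1))
      nlinarith [hδ1, hs, hs0]
  · -- n = 3
    intro γ hγ
    have ht : (4:ℝ) ≤ (γ:ℝ) := by exact_mod_cast hγ
    have hδ1 : 1 ≤ δ 3 γ := δ_ge_one 3 γ (by norm_num) (by omega)
    have hd0 : (0:ℝ) < ((d 3 γ : ℤ) : ℝ) := by
      exact_mod_cast d_pos 3 γ (by norm_num) (by omega)
    have hdlt := d_lt 3 γ (by norm_num)
    push_cast at hdlt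
    have hδ : (10:ℝ)/7 ≤ δ 3 γ := by
      unfold δ
      have h1 : (3:ℝ)/7 ≤ ((γ:ℝ)-1)/((d 3 γ : ℤ) : ℝ) := by
        rw [div_le_div_iff₀ (by norm_num) hd0]
        nlinarith [hdlt, ht]
      linarith
    have h := aMin_lt 3 γ (by norm_num) hδ1 ?_
    · convert h using 4 <;> push_cast <;> ring
    · push_cast
      have hs : Real.sqrt (2*(3:ℝ)*((3:ℝ)+1)) < 5 := by
        rw [show (2*(3:ℝ)*((3:ℝ)+1)) = 24 by norm_num]
        exact (Real.sqrt_lt' (by norm_num)).2 (by norm_num)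
      have hs0 := Real.sqrt_nonneg (2*(3:ℝ)*((3:ℝ)+1))
      nlinarith [hδ, hs, hs0]
  · -- n = 4
    intro γ hγ
    have ht : (40:ℝ) ≤ (γ:ℝ) := by exact_mod_cast hγ
    have hδ1 : 1 ≤ δ 4 γ := δ_ge_one 4 γ (by norm_num) (by omega)
    have hd0 : (0:ℝ) < ((d 4 γ : ℤ) : ℝ) := by
      exact_mod_cast d_pos 4 γ (by norm_num) (by omega)
    have hdlt := d_lt 4 γ (by norm_num)
    push_cast at hdlt
    have hδ : (76:ℝ)/37 ≤ δ 4 γ := by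
      unfold δ
      have h1 : (39:ℝ)/37 ≤ ((γ:ℝ)-1)/((d 4 γ : ℤ) : ℝ) := by
        rw [div_le_div_iff₀ (by norm_num) hd0]
        nlinarith [hdlt, ht]
      linarith
    have h := aMin_lt 4 γ (by norm_num) hδ1 ?_
    · convert h using 4 <;> push_cast <;> ring
    · push_cast
      rw [show ((2:ℝ) * 4 * (4 + 1)) = 40 by norm_num]
      have hs : Real.sqrt (40:ℝ) < 319/50 :=
        (Real.sqrt_lt' (by norm_num)).2 (by norm_num)
      have hs0 := Real.sqrt_nonneg (40:ℝ)
      nlinarith [hδ, hs, hs0,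
        mul_nonneg (by linarith : (0:ℝ) ≤ δ 4 γ - 76/37)
          (by linarith : (0:ℝ) ≤ 32 - Real.sqrt (40:ℝ))]
end

section
/- For every integer γ ≥ 41 one has F(a_min(2,γ), 2, γ) > F₅(γ). -/
open Real

/-- For any real `a`, once `δ ≥ 7/3` the F-ratio term is at least `-196/649`. -/
lemma key2 (a dv : ℝ) (h : 7/3 ≤ dv) :
    -(196/649 : ℝ) ≤ (2 * a ^ 2 * dv - 1/3) / ((2 * a - 1) ^ 2 + 1/3) := by
  have hden : (0:ℝ) < (2 * a - 1) ^ 2 + 1/3 := by positivity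
  rw [le_div_iff₀ hden]
  have hpos : (0:ℝ) < 1298 * dv + 784 := by linarith
  nlinarith [sq_nonneg (2 * (1298 * dv + 784) * a - 784), hpos, h,
    mul_pos hpos hpos]

set_option maxHeartbeats 1600000 in
theorem stmt_14 (γ : ℤ) (hγ : 41 ≤ γ) :
    F (aMin 2 γ) 2 γ > F₅ γ := by
  have hπ : (0:ℝ) < π := Real.pi_pos
  set g : ℝ := (γ : ℝ) with hgdef
  have hg : (41:ℝ) ≤ g := by rw [hgdef]; exact_mod_cast hγ
  -- ceiling bounds for d 2 γ
  set m2 : ℤ := ⌈(2:ℚ) * (γ:ℚ) / 3⌉ with hm2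
  have harg2 : ((2:ℤ):ℚ) * ((γ:ℤ):ℚ) / (((2:ℤ):ℚ) + 1) = (2:ℚ) * (γ:ℚ) / 3 := by
    push_cast; ring
  have hd2 : d 2 γ = m2 + 2 := by
    rw [hm2, d, harg2]
  have hq1 : (2:ℚ) * (γ:ℚ) / 3 ≤ (m2:ℚ) := Int.le_ceil _
  have hq2 : (m2:ℚ) < (2:ℚ) * (γ:ℚ) / 3 + 1 := Int.ceil_lt_add_one _
  have hz1 : 2 * γ ≤ 3 * m2 := by
    have : (2 * (γ:ℚ)) ≤ 3 * (m2:ℚ) := by linarith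
    exact_mod_cast this
  have hz2 : 3 * m2 ≤ 2 * γ + 2 := by
    have h' : (3 * (m2:ℚ)) < 2 * (γ:ℚ) + 3 := by linarith
    have h'' : (3 * m2 : ℤ) < 2 * γ + 3 := by exact_mod_cast h'
    omega
  set A : ℝ := ((d 2 γ : ℤ) : ℝ) with hA
  have hA1 : 2 * g + 6 ≤ 3 * A := by
    rw [hA, hd2, hgdef]; push_cast
    have : (2 * γ : ℝ) ≤ 3 * (m2:ℝ) := by exact_mod_cast hz1
    push_cast at this; linarith
  have hA2 : 3 * A ≤ 2 * g + 8 := by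
    rw [hA, hd2, hgdef]; push_cast
    have : (3 * m2 : ℝ) ≤ 2 * (γ:ℝ) + 2 := by exact_mod_cast hz2
    push_cast at this; linarith
  have hA0 : (0:ℝ) < A := by linarith
  -- ceiling bounds for d 5 γ
  set m5 : ℤ := ⌈(5:ℚ) * (γ:ℚ) / 6⌉ with hm5
  have harg5 : ((5:ℤ):ℚ) * ((γ:ℤ):ℚ) / (((5:ℤ):ℚ) + 1) = (5:ℚ) * (γ:ℚ) / 6 := by
    push_cast; ring
  have hd5 : d 5 γ = m5 + 5 := by
    rw [hm5, d, harg5]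
  have hq3 : (5:ℚ) * (γ:ℚ) / 6 ≤ (m5:ℚ) := Int.le_ceil _
  have hq4 : (m5:ℚ) < (5:ℚ) * (γ:ℚ) / 6 + 1 := Int.ceil_lt_add_one _
  have hz3 : 5 * γ ≤ 6 * m5 := by
    have : (5 * (γ:ℚ)) ≤ 6 * (m5:ℚ) := by linarith
    exact_mod_cast this
  have hz4 : 6 * m5 ≤ 5 * γ + 5 := by
    have h' : (6 * (m5:ℚ)) < 5 * (γ:ℚ) + 6 := by linarith
    have h'' : (6 * m5 : ℤ) < 5 * γ + 6 := by exact_mod_cast h'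
    omega
  set B : ℝ := ((d 5 γ : ℤ) : ℝ) with hB
  have hB1 : 5 * g + 30 ≤ 6 * B := by
    rw [hB, hd5, hgdef]; push_cast
    have : (5 * γ : ℝ) ≤ 6 * (m5:ℝ) := by exact_mod_cast hz3
    push_cast at this; linarith
  have hB2 : 6 * B ≤ 5 * g + 35 := by
    rw [hB, hd5, hgdef]; push_cast
    have : (6 * m5 : ℝ) ≤ 5 * (γ:ℝ) + 5 := by exact_mod_cast hz4
    push_cast at this; linarith
  have hB0 : (0:ℝ) < B := by linarith
  -- δ 2 γ ≥ 7/3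
  have hδ2def : δ 2 γ = 1 + (g - 1) / A := rfl
  have hδ2 : 7/3 ≤ δ 2 γ := by
    rw [hδ2def]
    have h43 : (4:ℝ)/3 ≤ (g - 1) / A := by
      rw [le_div_iff₀ hA0]; linarith
    linarith
  -- lower bound on F (aMin 2 γ) 2 γ
  have hFeq : F (aMin 2 γ) 2 γ
      = 8 * π * A * (1 + (2 * (aMin 2 γ) ^ 2 * δ 2 γ - 1/3) /
        ((2 * (aMin 2 γ) - 1) ^ 2 + 1/3)) := by
    simp only [F, ← hA]; norm_num
  have hF2 : 8 * π * A * (453/649) ≤ F (aMin 2 γ) 2 γ := by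
    rw [hFeq]
    have hX := key2 (aMin 2 γ) (δ 2 γ) hδ2
    have h8 : (0:ℝ) ≤ 8 * π * A := by positivity
    have : (453:ℝ)/649 ≤ 1 + (2 * (aMin 2 γ) ^ 2 * δ 2 γ - 1/3) /
        ((2 * (aMin 2 γ) - 1) ^ 2 + 1/3) := by linarith
    exact mul_le_mul_of_nonneg_left this h8
  -- sqrt 15 facts
  set s : ℝ := Real.sqrt 15 with hs
  have hs2 : s ^ 2 = 15 := Real.sq_sqrt (by norm_num)
  have hs0 : (0:ℝ) < s := Real.sqrt_pos.mpr (by norm_num)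
  have hslo : (3.8729:ℝ) ≤ s := by
    rw [hs, show (3.8729:ℝ) = Real.sqrt (3.8729^2) by
      rw [Real.sqrt_sq (by norm_num)]]
    exact Real.sqrt_le_sqrt (by norm_num)
  have hshi : s ≤ 3.873 := by
    rw [hs, show (3.873:ℝ) = Real.sqrt (3.873^2) by
      rw [Real.sqrt_sq (by norm_num)]]
    exact Real.sqrt_le_sqrt (by norm_num)
  have h60 : Real.sqrt 60 = 2 * s := by
    rw [hs, show (60:ℝ) = 2^2 * 15 by norm_num,
      Real.sqrt_mul (by positivity), Real.sqrt_sq (by norm_num)]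
  -- δ 5 γ
  set E : ℝ := (g - 1) / B with hE
  have hδ5def : δ 5 γ = 1 + E := rfl
  have hE0 : (0:ℝ) ≤ E := by
    apply div_nonneg (by linarith) hB0.le
  have hBE : B * E = g - 1 := by
    rw [hE]; field_simp
  have hE5 : E ≤ 6/5 := by
    nlinarith [mul_le_mul_of_nonneg_right hB1 hE0, hBE]
  -- F₅ expression
  have hF5eq : F₅ γ
      = 8 * π * B * (1 + (2 * (1 / Real.sqrt 60) ^ 2 * δ 5 γ - 2/3) /
        ((2 * (1 / Real.sqrt 60) - 1) ^ 2 + 2/3)) := by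
    simp only [F₅, F, ← hB]; norm_num
  have hinv : (1 / Real.sqrt 60) ^ 2 = 1/60 := by
    rw [div_pow, one_pow, Real.sq_sqrt (by norm_num : (0:ℝ) ≤ 60)]
  have hnum : 2 * (1 / Real.sqrt 60) ^ 2 * δ 5 γ - 2/3 = ((1 + E) - 20) / 30 := by
    rw [hinv, hδ5def]; ring
  have hden : (2 * (1 / Real.sqrt 60) - 1) ^ 2 + 2/3 = (26 - 2*s) / 15 := by
    rw [h60]
    have hsne : s ≠ 0 := ne_of_gt hs0
    field_simp
    nlinarith [hs2]
  have h26 : (0:ℝ) < 26 - 2*s := by nlinarith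
  have h52 : (0:ℝ) < 52 - 4*s := by nlinarith
  have hfrac : (2 * (1 / Real.sqrt 60) ^ 2 * δ 5 γ - 2/3) /
      ((2 * (1 / Real.sqrt 60) - 1) ^ 2 + 2/3) = ((1 + E) - 20) / (52 - 4*s) := by
    rw [hnum, hden]
    have hne : (26 - 2*s) ≠ 0 := ne_of_gt h26
    have hne2 : (52 - 4*s) ≠ 0 := ne_of_gt h52
    rw [div_div_div_eq, div_eq_div_iff (mul_ne_zero (by norm_num) hne) hne2]
    ring
  have hXle : ((1 + E) - 20) / (52 - 4*s) ≤ (E - 19) * (2500/91271) := by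
    rw [div_le_iff₀ h52]
    have hk : (0:ℝ) ≤ 1 - 2500/91271 * (52 - 4*s) := by nlinarith
    nlinarith [mul_nonneg (by linarith : (0:ℝ) ≤ 19 - E) hk]
  have hF5le : F₅ γ ≤ 8 * π * B * (1 + (E - 19) * (2500/91271)) := by
    rw [hF5eq, hfrac]
    have h8 : (0:ℝ) ≤ 8 * π * B := by positivity
    exact mul_le_mul_of_nonneg_left (by linarith) h8
  have hcore : B * (1 + (E - 19) * (2500/91271)) < A * (453/649) := by
    have expand : B * (1 + (E - 19) * (2500/91271))
        = B + (B * E) * (2500/91271) - B * (47500/91271) := by ring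
    rw [expand, hBE]
    linarith
  have hmid : 8 * π * B * (1 + (E - 19) * (2500/91271))
      < 8 * π * A * (453/649) := by
    have h8 : (0:ℝ) < 8 * π := by positivity
    calc 8 * π * B * (1 + (E - 19) * (2500/91271))
        = 8 * π * (B * (1 + (E - 19) * (2500/91271))) := by ring
      _ < 8 * π * (A * (453/649)) := by
          exact mul_lt_mul_of_pos_left hcore h8
      _ = 8 * π * A * (453/649) := by ring
  linarith
end

section
/- For every integer γ ≥ 109 one has F(a_min(3,γ), 3, γ) > F₅(γ). -/
open Real

/-- upper bound on the square root term -/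
lemma aux_Su (t : ℝ) (hl : (775:ℝ)/343 ≤ t) (hu : t ≤ 7/3) :
    Real.sqrt ((3*t+2)^2 - 16*t) ≤ (3*t+2) - (128/125)*t := by
  have hc : (0:ℝ) ≤ (3*t+2) - (128/125)*t := by nlinarith
  have hXle : (3*t+2)^2 - 16*t ≤ ((3*t+2) - (128/125)*t)^2 := by
    nlinarith [mul_nonneg (by linarith : (0:ℝ) ≤ t)
      (by linarith : (0:ℝ) ≤ 1488/125 - (79616/15625)*t)]
  calc Real.sqrt ((3*t+2)^2 - 16*t) ≤ Real.sqrt (((3*t+2) - (128/125)*t)^2) :=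
        Real.sqrt_le_sqrt hXle
    _ = (3*t+2) - (128/125)*t := Real.sqrt_sq hc

/-- lower bound on the square root term -/
lemma aux_Sl (t : ℝ) (hl : (775:ℝ)/343 ≤ t) (hu : t ≤ 7/3) :
    (3*t+2) - (132/125)*t ≤ Real.sqrt ((3*t+2)^2 - 16*t) := by
  have hXge : ((3*t+2) - (132/125)*t)^2 ≤ (3*t+2)^2 - 16*t := by
    nlinarith [mul_nonneg (by linarith : (0:ℝ) ≤ t)
      (by linarith : (0:ℝ) ≤ (81576/15625)*t - 1472/125)]
  calc (3*t+2) - (132/125)*t ≤ |(3*t+2) - (132/125)*t| := le_abs_self _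
    _ = Real.sqrt (((3*t+2) - (132/125)*t)^2) := (Real.sqrt_sq_eq_abs _).symm
    _ ≤ _ := Real.sqrt_le_sqrt hXge

/-- lower bound on the bracket for n = 3 at the minimizer -/
lemma aux_R3 (t A : ℝ) (hl : (775:ℝ)/343 ≤ t) (hAl : (16:ℝ)/125 ≤ A)
    (hAu : A ≤ 33/250) :
    (591:ℝ)/1000 ≤ 1 + (2*A^2*t - 1/2)/((2*A-1)^2 + 1/2) := by
  have hden : (0:ℝ) < (2*A-1)^2 + 1/2 := by positivity
  have h : (-409:ℝ)/1000 ≤ (2*A^2*t - 1/2)/((2*A-1)^2 + 1/2) := by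
    rw [le_div_iff₀ hden]
    nlinarith [sq_nonneg (A - 33/250),
      mul_nonneg (sq_nonneg A) (by linarith : (0:ℝ) ≤ t - 775/343)]
  linarith

/-- upper bound on the bracket for n = 5 -/
lemma aux_R5 (u a5 : ℝ) (hu : u ≤ 11/5) (hsq : a5^2 = 1/60)
    (hal : (129:ℝ)/1000 ≤ a5) (hah : a5 ≤ (130:ℝ)/1000) :
    1 + (2*a5^2*u - 2/3)/((2*a5-1)^2 + 2/3) ≤ (513:ℝ)/1000 := by
  have hden : (0:ℝ) < (2*a5-1)^2 + 2/3 := by positivity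
  have hdenu : (2*a5-1)^2 + 2/3 ≤ (12173:ℝ)/10000 := by
    nlinarith [mul_nonneg (by linarith : (0:ℝ) ≤ a5 - 129/1000)
      (by linarith : (0:ℝ) ≤ 130/1000 - a5)]
  have hnum : 2*a5^2*u - 2/3 ≤ -(89:ℝ)/150 := by
    rw [hsq]; linarith
  have h1 : (2*a5^2*u - 2/3)/((2*a5-1)^2 + 2/3) ≤ (-(89:ℝ)/150)/((2*a5-1)^2 + 2/3) :=
    (div_le_div_iff_of_pos_right hden).2 hnum
  have h2 : (-(89:ℝ)/150)/((2*a5-1)^2 + 2/3) ≤ -(487:ℝ)/1000 := by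
    rw [div_le_iff₀ hden]
    nlinarith
  linarith

theorem stmt_15 (γ : ℤ) (hγ : 109 ≤ γ) :
    F (aMin 3 γ) 3 γ > F₅ γ := by
  have hπ := Real.pi_pos
  have hg109 : (109:ℝ) ≤ (γ:ℝ) := by exact_mod_cast hγ
  -- d bounds
  have hd3l : 3*(γ:ℝ)/4 + 3 ≤ ((d 3 γ : ℤ):ℝ) := by
    have h := Int.le_ceil ((3:ℚ) * (γ:ℚ) / ((3:ℚ)+1))
    have h3 : ((3:ℝ)*(γ:ℝ)/4) ≤ ((⌈(3:ℚ) * (γ:ℚ) / ((3:ℚ)+1)⌉ : ℤ):ℝ) := by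
      have := (Rat.cast_le (K := ℝ)).2 h
      push_cast at this ⊢
      linarith
    simp only [d]
    push_cast at h3 ⊢
    linarith
  have hd3u : ((d 3 γ : ℤ):ℝ) ≤ 3*(γ:ℝ)/4 + 4 := by
    have h := (Int.ceil_lt_add_one ((3:ℚ) * (γ:ℚ) / ((3:ℚ)+1))).le
    have h3 : ((⌈(3:ℚ) * (γ:ℚ) / ((3:ℚ)+1)⌉ : ℤ):ℝ) ≤ ((3:ℝ)*(γ:ℝ)/4) + 1 := by
      have := (Rat.cast_le (K := ℝ)).2 h
      push_cast at this ⊢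
      linarith
    simp only [d]
    push_cast at h3 ⊢
    linarith
  have hd5l : 5*(γ:ℝ)/6 + 5 ≤ ((d 5 γ : ℤ):ℝ) := by
    have h := Int.le_ceil ((5:ℚ) * (γ:ℚ) / ((5:ℚ)+1))
    have h3 : ((5:ℝ)*(γ:ℝ)/6) ≤ ((⌈(5:ℚ) * (γ:ℚ) / ((5:ℚ)+1)⌉ : ℤ):ℝ) := by
      have := (Rat.cast_le (K := ℝ)).2 h
      push_cast at this ⊢
      linarith
    simp only [d]
    push_cast at h3 ⊢
    linarith
  have hd5u : ((d 5 γ : ℤ):ℝ) ≤ 5*(γ:ℝ)/6 + 6 := by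
    have h := (Int.ceil_lt_add_one ((5:ℚ) * (γ:ℚ) / ((5:ℚ)+1))).le
    have h3 : ((⌈(5:ℚ) * (γ:ℚ) / ((5:ℚ)+1)⌉ : ℤ):ℝ) ≤ ((5:ℝ)*(γ:ℝ)/6) + 1 := by
      have := (Rat.cast_le (K := ℝ)).2 h
      push_cast at this ⊢
      linarith
    simp only [d]
    push_cast at h3 ⊢
    linarith
  have hd3pos : (0:ℝ) < ((d 3 γ : ℤ):ℝ) := by linarith
  have hd5pos : (0:ℝ) < ((d 5 γ : ℤ):ℝ) := by linarith
  -- δ bounds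
  have hδ3def : δ 3 γ = 1 + ((γ:ℝ)-1)/((d 3 γ : ℤ):ℝ) := rfl
  have hδ5def : δ 5 γ = 1 + ((γ:ℝ)-1)/((d 5 γ : ℤ):ℝ) := rfl
  have hδ3l : (775:ℝ)/343 ≤ δ 3 γ := by
    rw [hδ3def]
    have : (432:ℝ)/343 ≤ ((γ:ℝ)-1)/((d 3 γ : ℤ):ℝ) := by
      rw [div_le_div_iff₀ (by norm_num) hd3pos]
      linarith
    linarith
  have hδ3u : δ 3 γ ≤ 7/3 := by
    rw [hδ3def]
    have : ((γ:ℝ)-1)/((d 3 γ : ℤ):ℝ) ≤ 4/3 := by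
      rw [div_le_div_iff₀ hd3pos (by norm_num)]
      linarith
    linarith
  have hδ5u : δ 5 γ ≤ 11/5 := by
    rw [hδ5def]
    have : ((γ:ℝ)-1)/((d 5 γ : ℤ):ℝ) ≤ 6/5 := by
      rw [div_le_div_iff₀ hd5pos (by norm_num)]
      linarith
    linarith
  have hδ3pos : (0:ℝ) < δ 3 γ := by linarith
  -- aMin closed form
  have hξ3 : ξ 3 γ = 3*(δ 3 γ) + 2 := by
    simp only [ξ]; push_cast; ring
  have haMin : aMin 3 γ = ((3*(δ 3 γ)+2) - Real.sqrt ((3*(δ 3 γ)+2)^2 - 16*(δ 3 γ))) /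
      (8*(δ 3 γ)) := by
    simp only [aMin, hξ3]
    norm_num
    ring_nf
  have hSu := aux_Su (δ 3 γ) hδ3l hδ3u
  have hSl := aux_Sl (δ 3 γ) hδ3l hδ3u
  have hAlo : (16:ℝ)/125 ≤ aMin 3 γ := by
    rw [haMin, le_div_iff₀ (by linarith)]
    linarith
  have hAhi : aMin 3 γ ≤ (33:ℝ)/250 := by
    rw [haMin, div_le_iff₀ (by linarith)]
    linarith
  -- F3 lower bound
  have hF3 : F (aMin 3 γ) 3 γ = 8 * π * ((d 3 γ : ℤ):ℝ) *
      (1 + (2*(aMin 3 γ)^2*(δ 3 γ) - 1/2)/((2*(aMin 3 γ)-1)^2 + 1/2)) := by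
    simp only [F]
    norm_num
  have hR3 := aux_R3 (δ 3 γ) (aMin 3 γ) hδ3l hAlo hAhi
  have hF3lb : 8 * π * (3*(γ:ℝ)/4 + 3) * (591/1000) ≤ F (aMin 3 γ) 3 γ := by
    rw [hF3]
    have h1 : 8 * π * (3*(γ:ℝ)/4 + 3) * ((591:ℝ)/1000) ≤
        8 * π * ((d 3 γ : ℤ):ℝ) * (591/1000) := by
      exact mul_le_mul_of_nonneg_right
        (mul_le_mul_of_nonneg_left hd3l (by positivity : (0:ℝ) ≤ 8*π)) (by norm_num)
    have hpd : (0:ℝ) ≤ 8 * π * ((d 3 γ : ℤ):ℝ) := by positivity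
    have h2 := mul_le_mul_of_nonneg_left hR3 hpd
    linarith
  -- F5 upper bound
  have hs60 : Real.sqrt 60 ^ 2 = 60 := Real.sq_sqrt (by norm_num)
  have hs60l : (7745:ℝ)/1000 ≤ Real.sqrt 60 := by
    rw [show (7745:ℝ)/1000 = Real.sqrt ((7745/1000)^2) by rw [Real.sqrt_sq]; norm_num]
    exact Real.sqrt_le_sqrt (by norm_num)
  have hs60u : Real.sqrt 60 ≤ (7746:ℝ)/1000 := by
    rw [show (7746:ℝ)/1000 = Real.sqrt ((7746/1000)^2) by rw [Real.sqrt_sq]; norm_num]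
    exact Real.sqrt_le_sqrt (by norm_num)
  have hs60pos : (0:ℝ) < Real.sqrt 60 := by linarith
  have ha5sq : (1 / Real.sqrt 60)^2 = (1:ℝ)/60 := by
    rw [div_pow, hs60]; norm_num
  have ha5lo : (129:ℝ)/1000 ≤ 1 / Real.sqrt 60 := by
    rw [le_div_iff₀ hs60pos]; linarith
  have ha5hi : 1 / Real.sqrt 60 ≤ (130:ℝ)/1000 := by
    rw [div_le_iff₀ hs60pos]; linarith
  have hF5 : F₅ γ = 8 * π * ((d 5 γ : ℤ):ℝ) *
      (1 + (2*(1 / Real.sqrt 60)^2*(δ 5 γ) - 2/3)/((2*(1 / Real.sqrt 60)-1)^2 + 2/3)) := by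
    simp only [F₅, F]
    norm_num
  have hR5 := aux_R5 (δ 5 γ) (1 / Real.sqrt 60) hδ5u ha5sq ha5lo ha5hi
  have hF5ub : F₅ γ ≤ 8 * π * (5*(γ:ℝ)/6 + 6) * (513/1000) := by
    rw [hF5]
    have hpd : (0:ℝ) ≤ 8 * π * ((d 5 γ : ℤ):ℝ) := by positivity
    have h3 := mul_le_mul_of_nonneg_left hR5 hpd
    have h4 : 8 * π * ((d 5 γ : ℤ):ℝ) * ((513:ℝ)/1000) ≤
        8 * π * (5*(γ:ℝ)/6 + 6) * (513/1000) := by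
      exact mul_le_mul_of_nonneg_right
        (mul_le_mul_of_nonneg_left hd5u (by positivity : (0:ℝ) ≤ 8*π)) (by norm_num)
    linarith
  -- final arithmetic
  have hXY : (5*(γ:ℝ)/6 + 6) * ((513:ℝ)/1000) < (3*(γ:ℝ)/4 + 3) * (591/1000) := by
    linarith
  have hfin : 8 * π * (5*(γ:ℝ)/6 + 6) * (513/1000) <
      8 * π * (3*(γ:ℝ)/4 + 3) * (591/1000) := by
    have h8 : (0:ℝ) < 8 * π := by positivity
    have := mul_lt_mul_of_pos_left hXY h8
    linarith
  calc F₅ γ ≤ 8 * π * (5*(γ:ℝ)/6 + 6) * (513/1000) := hF5ub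
    _ < 8 * π * (3*(γ:ℝ)/4 + 3) * (591/1000) := hfin
    _ ≤ F (aMin 3 γ) 3 γ := hF3lb
end

section
/- For every integer γ ≥ 389 one has F(a_min(4,γ), 4, γ) > F₅(γ). -/
open Real

private lemma F4_eq (a : ℝ) (γ : ℤ) :
    F a 4 γ = 8*π*((d 4 γ : ℤ):ℝ)*(1 + (2*a^2*δ 4 γ - 3/5)/((2*a-1)^2+3/5)) := by
  unfold F; norm_num

private lemma F5_eq (a : ℝ) (γ : ℤ) :
    F a 5 γ = 8*π*((d 5 γ : ℤ):ℝ)*(1 + (2*a^2*δ 5 γ - 2/3)/((2*a-1)^2+2/3)) := by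
  unfold F; norm_num

private lemma xi4_eq (γ : ℤ) : ξ 4 γ = 4 * δ 4 γ + 3 := by unfold ξ; norm_num

private lemma aMin4_eq (γ : ℤ) :
    aMin 4 γ = (ξ 4 γ - Real.sqrt (ξ 4 γ ^ 2 - 30 * δ 4 γ)) / (10 * δ 4 γ) := by
  unfold aMin; norm_num; ring_nf

private lemma d4_bounds (γ : ℤ) : (4*γ+20 : ℤ) ≤ 5 * d 4 γ ∧ 5 * d 4 γ ≤ 4*γ+24 := by
  have h1 : ((4:ℤ):ℚ) * (γ:ℚ) / (((4:ℤ):ℚ)+1) ≤ (⌈((4:ℤ):ℚ) * (γ:ℚ) / (((4:ℤ):ℚ)+1)⌉ : ℚ) :=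
    Int.le_ceil _
  have h2 : (⌈((4:ℤ):ℚ) * (γ:ℚ) / (((4:ℤ):ℚ)+1)⌉ : ℚ) < ((4:ℤ):ℚ) * (γ:ℚ) / (((4:ℤ):ℚ)+1) + 1 :=
    Int.ceil_lt_add_one _
  unfold d
  constructor
  · qify; push_cast at h1 ⊢; linarith
  · have : 5 * (⌈((4:ℤ):ℚ) * (γ:ℚ) / (((4:ℤ):ℚ)+1)⌉:ℤ) < 4*γ + 5 := by
      qify; push_cast at h2 ⊢; linarith
    omega

private lemma d5_bounds (γ : ℤ) : (5*γ+30 : ℤ) ≤ 6 * d 5 γ ∧ 6 * d 5 γ ≤ 5*γ+35 := by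
  have h1 : ((5:ℤ):ℚ) * (γ:ℚ) / (((5:ℤ):ℚ)+1) ≤ (⌈((5:ℤ):ℚ) * (γ:ℚ) / (((5:ℤ):ℚ)+1)⌉ : ℚ) :=
    Int.le_ceil _
  have h2 : (⌈((5:ℤ):ℚ) * (γ:ℚ) / (((5:ℤ):ℚ)+1)⌉ : ℚ) < ((5:ℤ):ℚ) * (γ:ℚ) / (((5:ℤ):ℚ)+1) + 1 :=
    Int.ceil_lt_add_one _
  unfold d
  constructor
  · qify; push_cast at h1 ⊢; linarith
  · have : 6 * (⌈((5:ℤ):ℚ) * (γ:ℚ) / (((5:ℤ):ℚ)+1)⌉:ℤ) < 5*γ + 6 := by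
      qify; push_cast at h2 ⊢; linarith
    omega

set_option maxHeartbeats 1000000 in
theorem stmt_16 (γ : ℤ) (hγ : 389 ≤ γ) :
    F (aMin 4 γ) 4 γ > F₅ γ := by
  have hγℝ : (389:ℝ) ≤ (γ:ℝ) := by exact_mod_cast hγ
  obtain ⟨hd4l, hd4u⟩ := d4_bounds γ
  obtain ⟨hd5l, hd5u⟩ := d5_bounds γ
  have hD4l : 4*(γ:ℝ)+20 ≤ 5*((d 4 γ : ℤ):ℝ) := by exact_mod_cast hd4l
  have hD4u : 5*((d 4 γ : ℤ):ℝ) ≤ 4*(γ:ℝ)+24 := by exact_mod_cast hd4u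
  have hD5l : 5*(γ:ℝ)+30 ≤ 6*((d 5 γ : ℤ):ℝ) := by exact_mod_cast hd5l
  have hD5u : 6*((d 5 γ : ℤ):ℝ) ≤ 5*(γ:ℝ)+35 := by exact_mod_cast hd5u
  have hD4pos : (0:ℝ) < ((d 4 γ : ℤ):ℝ) := by linarith
  have hD5pos : (0:ℝ) < ((d 5 γ : ℤ):ℝ) := by linarith
  -- δ bounds
  have hδ4eq : δ 4 γ = 1 + ((γ:ℝ) - 1) / ((d 4 γ : ℤ):ℝ) := rfl
  have hδ5eq : δ 5 γ = 1 + ((γ:ℝ) - 1) / ((d 5 γ : ℤ):ℝ) := rfl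
  have hδ4hi : δ 4 γ ≤ 9/4 := by
    rw [hδ4eq]
    have : ((γ:ℝ) - 1) / ((d 4 γ : ℤ):ℝ) ≤ 5/4 := by
      rw [div_le_iff₀ hD4pos]; linarith
    linarith
  have hδ4lo : (2.2278:ℝ) ≤ δ 4 γ := by
    rw [hδ4eq]
    have : (6139/5000:ℝ) ≤ ((γ:ℝ) - 1) / ((d 4 γ : ℤ):ℝ) := by
      rw [le_div_iff₀ hD4pos]; linarith
    norm_num at this ⊢
    linarith
  have hδ5hi : δ 5 γ ≤ 11/5 := by
    rw [hδ5eq]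
    have : ((γ:ℝ) - 1) / ((d 5 γ : ℤ):ℝ) ≤ 6/5 := by
      rw [div_le_iff₀ hD5pos]; linarith
    linarith
  have hδ4pos : (0:ℝ) < δ 4 γ := by linarith
  -- the sqrt in aMin for n = 4
  set s : ℝ := Real.sqrt (ξ 4 γ ^ 2 - 30 * δ 4 γ) with hs
  have hξ : ξ 4 γ = 4 * δ 4 γ + 3 := xi4_eq γ
  have hdisc_eq : ξ 4 γ ^ 2 - 30 * δ 4 γ = 16*(δ 4 γ)^2 - 6*δ 4 γ + 9 := by rw [hξ]; ring
  have hdisc_nn : (0:ℝ) ≤ ξ 4 γ ^ 2 - 30 * δ 4 γ := by rw [hdisc_eq]; linarith [sq_nonneg (4*δ 4 γ - 3/4)]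
  have hs2 : s^2 = ξ 4 γ ^ 2 - 30 * δ 4 γ := Real.sq_sqrt hdisc_nn
  have hs_nn : 0 ≤ s := Real.sqrt_nonneg _
  have hshi : s ≤ 8.74643 := by
    have h1 : ξ 4 γ ^ 2 - 30 * δ 4 γ ≤ (8.74643:ℝ)^2 := by
      rw [hdisc_eq]
      linarith [mul_nonneg (sub_nonneg.2 hδ4lo) (sub_nonneg.2 hδ4hi), hδ4hi]
    calc s ≤ Real.sqrt ((8.74643:ℝ)^2) := Real.sqrt_le_sqrt h1
    _ = 8.74643 := Real.sqrt_sq (by norm_num)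
  have hslo : (8.6627:ℝ) ≤ s := by
    have h1 : (8.6627:ℝ)^2 ≤ ξ 4 γ ^ 2 - 30 * δ 4 γ := by
      rw [hdisc_eq]; linarith [sq_nonneg (δ 4 γ - 2.2278), hδ4lo]
    calc (8.6627:ℝ) = Real.sqrt ((8.6627:ℝ)^2) := (Real.sqrt_sq (by norm_num)).symm
    _ ≤ s := Real.sqrt_le_sqrt h1
  have hsum_pos : (0:ℝ) < ξ 4 γ + s := by rw [hξ]; linarith
  -- closed form for aMin
  have ha : aMin 4 γ = 3 / (ξ 4 γ + s) := by
    rw [aMin4_eq, ← hs, div_eq_div_iff (by positivity) hsum_pos.ne']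
    linear_combination -hs2
  set a : ℝ := aMin 4 γ with haa
  have hsl : (20.5739:ℝ) ≤ ξ 4 γ + s := by rw [hξ]; linarith
  have hsh : ξ 4 γ + s ≤ (20.74643:ℝ) := by rw [hξ]; linarith
  have halo : (0.1446:ℝ) ≤ a := by
    rw [ha, le_div_iff₀ hsum_pos]; linarith
  have hahi : a ≤ (0.14582:ℝ) := by
    rw [ha, div_le_iff₀ hsum_pos]; linarith
  -- lower bound for the n = 4 factor
  have hDen4pos : (0:ℝ) < (2*a-1)^2 + 3/5 := by positivity
  have hf4 : (0.5399:ℝ) ≤ 1 + (2*a^2*δ 4 γ - 3/5)/((2*a-1)^2+3/5) := by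
    have hq : (-0.4601:ℝ) ≤ (2*a^2*δ 4 γ - 3/5)/((2*a-1)^2+3/5) := by
      rw [le_div_iff₀ hDen4pos]
      have ha2 : (0.1446:ℝ)^2 ≤ a^2 := by
        have h0 : (0:ℝ) ≤ a + 0.1446 := by linarith
        have := mul_nonneg (sub_nonneg.2 halo) h0
        linarith
      have h2ad : 2*(0.1446:ℝ)^2*2.2278 ≤ 2*a^2*δ 4 γ := by
        have := mul_le_mul ha2 hδ4lo (by norm_num) (sq_nonneg a)
        linarith
      have h1a : (0.70836:ℝ) ≤ 1 - 2*a := by linarith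
      have hden4 : (0.70836:ℝ)^2 ≤ (2*a-1)^2 := by
        have h0 : (0:ℝ) ≤ 1 - 2*a - 0.70836 := by linarith
        have h0' : (0:ℝ) ≤ 1 - 2*a + 0.70836 := by linarith
        have := mul_nonneg h0 h0'
        linarith
      linarith [h2ad, hden4]
    linarith
  -- upper bound for the n = 5 factor
  set t : ℝ := Real.sqrt 60 with ht
  have ht2 : t^2 = 60 := Real.sq_sqrt (by norm_num)
  have htpos : (0:ℝ) < t := Real.sqrt_pos.mpr (by norm_num)
  have htlo : (7:ℝ) ≤ t := by
    calc (7:ℝ) = Real.sqrt (7^2) := (Real.sqrt_sq (by norm_num)).symm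
    _ ≤ t := Real.sqrt_le_sqrt (by norm_num)
  have hthi : t ≤ 7.746 := by
    calc t ≤ Real.sqrt ((7.746:ℝ)^2) := Real.sqrt_le_sqrt (by norm_num)
    _ = 7.746 := Real.sqrt_sq (by norm_num)
  have hu2 : (1/t)^2 = 1/60 := by rw [div_pow, ht2]; norm_num
  have hDen5 : (2*(1/t)-1)^2 + 2/3 = 26/15 - 4*(1/t) := by
    have : (2*(1/t)-1)^2 = 4*(1/t)^2 - 4*(1/t) + 1 := by ring
    rw [this, hu2]; ring
  have hDen5pos : (0:ℝ) < (2*(1/t)-1)^2 + 2/3 := by positivity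
  have hDen5hi : (2*(1/t)-1)^2 + 2/3 ≤ 1.21694 := by
    rw [hDen5]
    have hinv : (1:ℝ)/7.746 ≤ 1/t := one_div_le_one_div_of_le htpos hthi
    linarith
  have hf5 : 1 + (2*(1/t)^2*δ 5 γ - 2/3)/((2*(1/t)-1)^2+2/3) ≤ (0.5125:ℝ) := by
    have hN5 : 2*(1/t)^2*δ 5 γ - 2/3 ≤ -(89/150 : ℝ) := by
      rw [hu2]; linarith
    have hq : (2*(1/t)^2*δ 5 γ - 2/3)/((2*(1/t)-1)^2+2/3) ≤ -0.4875 := by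
      rw [div_le_iff₀ hDen5pos]
      linarith [hN5, hDen5hi]
    linarith
  -- assemble
  have key : ((d 5 γ : ℤ):ℝ) * (1 + (2*(1/t)^2*δ 5 γ - 2/3)/((2*(1/t)-1)^2+2/3))
      < ((d 4 γ : ℤ):ℝ) * (1 + (2*a^2*δ 4 γ - 3/5)/((2*a-1)^2+3/5)) := by
    have h1 : ((d 5 γ : ℤ):ℝ) * (1 + (2*(1/t)^2*δ 5 γ - 2/3)/((2*(1/t)-1)^2+2/3))
        ≤ ((d 5 γ : ℤ):ℝ) * 0.5125 := by
      exact mul_le_mul_of_nonneg_left hf5 (le_of_lt hD5pos)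
    have h2 : ((d 4 γ : ℤ):ℝ) * 0.5399
        ≤ ((d 4 γ : ℤ):ℝ) * (1 + (2*a^2*δ 4 γ - 3/5)/((2*a-1)^2+3/5)) := by
      exact mul_le_mul_of_nonneg_left hf4 (le_of_lt hD4pos)
    have h3 : ((d 5 γ : ℤ):ℝ) * 0.5125 < ((d 4 γ : ℤ):ℝ) * 0.5399 := by linarith
    linarith
  have h8 : (0:ℝ) < 8*π := by positivity
  rw [gt_iff_lt, F₅, F5_eq, F4_eq, ← ht]
  calc 8*π*((d 5 γ : ℤ):ℝ)*(1 + (2*(1/t)^2*δ 5 γ - 2/3)/((2*(1/t)-1)^2+2/3))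
      = 8*π*(((d 5 γ : ℤ):ℝ)*(1 + (2*(1/t)^2*δ 5 γ - 2/3)/((2*(1/t)-1)^2+2/3))) := by ring
    _ < 8*π*(((d 4 γ : ℤ):ℝ)*(1 + (2*a^2*δ 4 γ - 3/5)/((2*a-1)^2+3/5))) :=
        mul_lt_mul_of_pos_left key h8
    _ = 8*π*((d 4 γ : ℤ):ℝ)*(1 + (2*a^2*δ 4 γ - 3/5)/((2*a-1)^2+3/5)) := by ring
end

section
/- Let n ≥ 2 and γ ≥ 0 be integers and suppose a_min(n,γ) ≠ 1/2. Then F(a_min(n,γ), n, γ) = 8π·d(n,γ)·(1 − δ(n,γ)·a_min(n,γ)/(1 − 2·a_min(n,γ))). -/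
open Real

theorem stmt_17 (n γ : ℤ) (hn : 2 ≤ n) (hγ : 0 ≤ γ) (ha : aMin n γ ≠ 1 / 2) :
    F (aMin n γ) n γ =
      8 * π * ((d n γ : ℤ) : ℝ) *
        (1 - δ n γ * aMin n γ / (1 - 2 * aMin n γ)) := by
  have hnR : (2:ℝ) ≤ (n:ℝ) := by exact_mod_cast hn
  have hγR : (0:ℝ) ≤ (γ:ℝ) := by exact_mod_cast hγ
  -- d ≥ n ≥ 2
  have hdge : (n:ℤ) ≤ d n γ := by
    have hceil : (0:ℤ) ≤ ⌈(n : ℚ) * (γ : ℚ) / ((n : ℚ) + 1)⌉ := by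
      apply Int.ceil_nonneg
      have hn' : (0:ℚ) < (n:ℚ) + 1 := by
        have : (2:ℚ) ≤ (n:ℚ) := by exact_mod_cast hn
        linarith
      apply div_nonneg _ (le_of_lt hn')
      have h1 : (0:ℚ) ≤ (n:ℚ) := by
        have : (2:ℚ) ≤ (n:ℚ) := by exact_mod_cast hn
        linarith
      have h2 : (0:ℚ) ≤ (γ:ℚ) := by exact_mod_cast hγ
      positivity
    unfold d; linarith
  have hdR : (2:ℝ) ≤ ((d n γ : ℤ) : ℝ) := by
    have : (2:ℤ) ≤ d n γ := le_trans hn hdge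
    exact_mod_cast this
  have hd0 : ((d n γ : ℤ) : ℝ) ≠ 0 := by linarith
  have hδeq : δ n γ = (((d n γ : ℤ) : ℝ) + (γ:ℝ) - 1) / ((d n γ : ℤ) : ℝ) := by
    unfold δ; field_simp; ring
  have hδ0 : 0 < δ n γ := by
    rw [hδeq]; apply div_pos <;> linarith
  have hn1 : (0:ℝ) < (n:ℝ) + 1 := by linarith
  have hden : 2 * δ n γ * ((n:ℝ) + 1) ≠ 0 := by positivity
  -- discriminant nonneg
  have hΔ : 0 ≤ ξ n γ ^ 2 - 2 * ((n : ℝ) ^ 2 - 1) * δ n γ := by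
    unfold ξ
    nlinarith [sq_nonneg ((n:ℝ) * δ n γ - ((n:ℝ) - 1)), hδ0, hnR]
  set s := Real.sqrt (ξ n γ ^ 2 - 2 * ((n : ℝ) ^ 2 - 1) * δ n γ) with hs
  have hs2 : s ^ 2 = ξ n γ ^ 2 - 2 * ((n : ℝ) ^ 2 - 1) * δ n γ := Real.sq_sqrt hΔ
  have ha2 : 2 * δ n γ * ((n:ℝ) + 1) * aMin n γ = ξ n γ - s := by
    unfold aMin
    rw [← hs]
    field_simp
  -- quadratic equation for aMin
  have hquad : δ n γ * ((n:ℝ) + 1) * aMin n γ ^ 2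
      = ξ n γ * aMin n γ - ((n:ℝ) - 1) / 2 := by
    have h4 : 4 * (δ n γ * ((n:ℝ) + 1)) ^ 2 * aMin n γ ^ 2
        = 4 * (δ n γ * ((n:ℝ) + 1)) * (ξ n γ * aMin n γ - ((n:ℝ) - 1) / 2) := by
      have hsq : (2 * δ n γ * ((n:ℝ) + 1) * aMin n γ - ξ n γ) ^ 2 = s ^ 2 := by
        rw [ha2]; ring
      rw [hs2] at hsq
      nlinarith [hsq]
    have hne : (4 : ℝ) * (δ n γ * ((n:ℝ) + 1)) ≠ 0 := by positivity
    apply mul_left_cancel₀ hne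
    nlinarith [h4]
  set a := aMin n γ
  have h2a : 1 - 2 * a ≠ 0 := by
    intro h
    apply ha
    have : a = 1 / 2 := by linarith
    exact this
  have hk : (0:ℝ) < ((n:ℝ) - 1) / ((n:ℝ) + 1) := by
    apply div_pos <;> linarith
  have hD : (2 * a - 1) ^ 2 + ((n:ℝ) - 1) / ((n:ℝ) + 1) ≠ 0 := by positivity
  unfold F
  have key : 1 + (2 * a ^ 2 * δ n γ - ((n : ℝ) - 1) / ((n : ℝ) + 1)) /
      ((2 * a - 1) ^ 2 + ((n : ℝ) - 1) / ((n : ℝ) + 1))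
      = 1 - δ n γ * a / (1 - 2 * a) := by
    have hn1' : (n:ℝ) + 1 ≠ 0 := ne_of_gt hn1
    have hD2 : (2*a-1)^2*((n:ℝ)+1) + ((n:ℝ)-1) ≠ 0 := by
      have : 0 ≤ (2*a-1)^2 := sq_nonneg _
      nlinarith
    have hξ : ξ n γ = (n:ℝ) * δ n γ + ((n:ℝ) - 1) := rfl
    rw [hξ] at hquad
    have hD3 : ((n:ℝ) + 1) * (2 * a - 1) ^ 2 + ((n:ℝ) - 1) ≠ 0 := by rw [mul_comm]; exact hD2
    field_simp
    nlinarith [hquad]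
  rw [key]
end

section
/- Let n ≥ 1 be an integer and let ∂H denote the set of (n+1)×(n+1) complex matrices A that are positive semidefinite, have trace 1, and have rank at most n. Then the infimum over A ∈ ∂H of the quantity √(2·Re tr((A − (1/(n+1))·I)·(A − (1/(n+1))·I))) equals √(2/(n(n+1))), and this infimum is attained by some A ∈ ∂H. -/
open ComplexOrder

open Matrix in
lemma aux_trace_eq {m : ℕ} {A : Matrix (Fin m) (Fin m) ℂ} (hA : A.IsHermitian) :
    A.trace = ∑ i, (hA.eigenvalues i : ℂ) := by
  conv_lhs => rw [hA.spectral_theorem, Unitary.conjStarAlgAut_apply]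
  rw [trace_mul_cycle, (Matrix.mem_unitaryGroup_iff').mp (hA.eigenvectorUnitary).2,
    one_mul, trace_diagonal]
  rfl

open Matrix in
lemma aux_trace_sq {m : ℕ} {A : Matrix (Fin m) (Fin m) ℂ} (hA : A.IsHermitian) (c : ℝ) :
    ((A - (c : ℂ) • 1) * (A - (c : ℂ) • 1)).trace
      = ∑ i, (((hA.eigenvalues i - c : ℝ)) : ℂ) ^ 2 := by
  set U := (hA.eigenvectorUnitary : Matrix (Fin m) (Fin m) ℂ) with hUdef
  have hU : star U * U = 1 := (Matrix.mem_unitaryGroup_iff').mp (hA.eigenvectorUnitary).2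
  have hU' : U * star U = 1 := (Matrix.mem_unitaryGroup_iff).mp (hA.eigenvectorUnitary).2
  have h1 : A - (c : ℂ) • 1 = U * diagonal (fun i => ((hA.eigenvalues i : ℂ) - c)) * star U := by
    have hc : (c : ℂ) • (1 : Matrix (Fin m) (Fin m) ℂ) = U * ((c : ℂ) • 1) * star U := by
      rw [Matrix.mul_smul, Matrix.smul_mul, mul_one, hU']
    conv_lhs => rw [hA.spectral_theorem, Unitary.conjStarAlgAut_apply, hc]
    rw [← Matrix.sub_mul, ← Matrix.mul_sub]
    congr 1
    congr 1
    rw [← Matrix.diagonal_one, ← Matrix.diagonal_smul, Matrix.diagonal_sub]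
    congr 1
    funext i
    simp
  rw [h1]
  have : U * diagonal (fun i => ((hA.eigenvalues i : ℂ) - c)) * star U *
      (U * diagonal (fun i => ((hA.eigenvalues i : ℂ) - c)) * star U)
      = U * (diagonal (fun i => ((hA.eigenvalues i : ℂ) - c)) *
          diagonal (fun i => ((hA.eigenvalues i : ℂ) - c))) * star U := by
    have h5 : ∀ X : Matrix (Fin m) (Fin m) ℂ, star U * (U * X) = X := by
      intro X; rw [← Matrix.mul_assoc, hU, one_mul]
    simp only [Matrix.mul_assoc, h5]
  rw [this, trace_mul_cycle, ← mul_assoc, hU, one_mul, diagonal_mul_diagonal, trace_diagonal]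
  congr 1
  ext i
  push_cast
  ring

theorem stmt_18 (n : ℕ) (hn : 1 ≤ n) :
    IsLeast
      ((fun A : Matrix (Fin (n + 1)) (Fin (n + 1)) ℂ =>
          Real.sqrt (2 * ((A - (1 / ((n : ℂ) + 1)) • 1) * (A - (1 / ((n : ℂ) + 1)) • 1)).trace.re)) ''
        {A : Matrix (Fin (n + 1)) (Fin (n + 1)) ℂ |
          A.PosSemidef ∧ A.trace = 1 ∧ A.rank ≤ n})
      (Real.sqrt (2 / ((n : ℝ) * ((n : ℝ) + 1)))) := by
  have hn0 : (0:ℝ) < (n:ℝ) := by exact_mod_cast hn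
  have hnC : ((n:ℂ)) ≠ 0 := by exact_mod_cast hn0.ne'
  have hcast : (1 / ((n : ℂ) + 1)) = (((1 / ((n:ℝ) + 1)) : ℝ) : ℂ) := by push_cast; ring
  set c : ℝ := 1 / ((n:ℝ) + 1) with hc
  constructor
  · -- membership: the diagonal matrix with entries (0, 1/n, ..., 1/n)
    refine ⟨Matrix.diagonal (fun i : Fin (n+1) => if i = 0 then 0 else ((n:ℂ))⁻¹), ⟨?_, ?_, ?_⟩, ?_⟩
    · refine Matrix.posSemidef_diagonal_iff.mpr fun i => ?_
      split
      · exact le_refl _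
      · rw [show ((n:ℂ))⁻¹ = ((((n:ℝ))⁻¹ : ℝ) : ℂ) by push_cast; ring]
        exact Complex.zero_le_real.mpr (by positivity)
    · rw [Matrix.trace_diagonal, Fin.sum_univ_succ]
      simp [Fin.succ_ne_zero, hnC]
    · rw [Matrix.rank_diagonal]
      have : Fintype.card {i : Fin (n+1) // (if i = 0 then (0:ℂ) else ((n:ℂ))⁻¹) ≠ 0}
          = Fintype.card {i : Fin (n+1) // i ≠ 0} := by
        apply Fintype.card_congr
        apply Equiv.subtypeEquivRight
        intro i
        by_cases h : i = 0 <;> simp [h, inv_ne_zero hnC]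
      rw [this]
      simp [Fintype.card_subtype_compl]
    · rw [show ((1 / ((n : ℂ) + 1))) = ((c:ℝ):ℂ) from hcast]
      beta_reduce
      have h1 : Matrix.diagonal (fun i : Fin (n+1) => if i = 0 then 0 else ((n:ℂ))⁻¹)
          - ((c:ℝ) : ℂ) • 1
          = Matrix.diagonal (fun i : Fin (n+1) => (if i = 0 then 0 else ((n:ℂ))⁻¹) - c) := by
        rw [← Matrix.diagonal_one, ← Matrix.diagonal_smul, Matrix.diagonal_sub]
        congr 1
        funext i
        simp
      rw [h1, Matrix.diagonal_mul_diagonal, Matrix.trace_diagonal]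
      have h2 : ∑ i : Fin (n+1), ((if i = 0 then (0:ℂ) else ((n:ℂ))⁻¹) - c)
            * ((if i = 0 then (0:ℂ) else ((n:ℂ))⁻¹) - c)
          = ((1 / ((n:ℝ) * ((n:ℝ)+1)) : ℝ) : ℂ) := by
        rw [Fin.sum_univ_succ]
        simp only [if_pos rfl, Fin.succ_ne_zero, if_false, Finset.sum_const,
          Finset.card_univ, Fintype.card_fin, nsmul_eq_mul]
        rw [hc]
        have hn1 : ((n:ℝ) + 1) ≠ 0 := by positivity
        push_cast
        field_simp
        ring
      rw [h2, Complex.ofReal_re]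
      congr 1
      rw [mul_one_div, eq_div_iff (by positivity)]
      field_simp
  · -- lower bound
    rintro x ⟨A, ⟨hPSD, htr, hrank⟩, rfl⟩
    rw [show ((1 / ((n : ℂ) + 1))) = ((c:ℝ):ℂ) from hcast]
    beta_reduce
    have hH := hPSD.1
    set l := hH.eigenvalues with hl
    have htrl : ∑ i, l i = 1 := by
      have := aux_trace_eq hH
      rw [htr] at this
      have : ((∑ i, l i : ℝ) : ℂ) = 1 := by push_cast; rw [← this]
      exact_mod_cast this
    have hzero : ∃ i0, l i0 = 0 := by
      by_contra h
      push_neg at h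
      have hcard : Fintype.card {i // l i ≠ 0} = n + 1 := by
        rw [Fintype.card_congr (Equiv.subtypeUnivEquiv h)]
        simp
      have := hH.rank_eq_card_non_zero_eigs
      rw [hcard] at this
      omega
    obtain ⟨i0, hi0⟩ := hzero
    have hre : ((A - ((c:ℝ):ℂ) • 1) * (A - ((c:ℝ):ℂ) • 1)).trace.re
        = ∑ i, (l i - c)^2 := by
      rw [aux_trace_sq hH c]
      have : (∑ i, (((l i - c : ℝ)) : ℂ) ^ 2) = ((∑ i, (l i - c)^2 : ℝ) : ℂ) := by
        push_cast; ring
      rw [this, Complex.ofReal_re]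
    rw [hre]
    apply Real.sqrt_le_sqrt
    have hsplit : ∑ i, (l i - c)^2
        = (l i0 - c)^2 + ∑ i ∈ Finset.univ.erase i0, (l i - c)^2 := by
      exact (Finset.add_sum_erase _ (fun i => (l i - c)^2) (Finset.mem_univ i0)).symm
    have hcardE : (Finset.univ.erase i0).card = n := by
      rw [Finset.card_erase_of_mem (Finset.mem_univ i0)]
      simp
    have hsum : ∑ i ∈ Finset.univ.erase i0, (l i - c) = 1 - n * c := by
      have : ∑ i ∈ Finset.univ.erase i0, (l i - c)
          = (∑ i, (l i - c)) - (l i0 - c) := by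
        rw [← Finset.add_sum_erase _ _ (Finset.mem_univ i0)]; ring
      rw [this, Finset.sum_sub_distrib, htrl, hi0, Finset.sum_const, Finset.card_univ,
        Fintype.card_fin, nsmul_eq_mul]
      push_cast
      ring
    have hCS := sq_sum_le_card_mul_sum_sq (s := Finset.univ.erase i0)
      (f := fun i => l i - c)
    rw [hsum, hcardE] at hCS
    have hn1 : ((n:ℝ) + 1) ≠ 0 := by positivity
    have key : (1:ℝ) / ((n:ℝ) * ((n:ℝ)+1)) ≤ ∑ i, (l i - c)^2 := by
      rw [hsplit, hi0]
      have h2 : (0 - c)^2 = 1/((n:ℝ)+1)^2 := by rw [hc]; field_simp; ring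
      have h3 : (1 - (n:ℝ) * c)^2 = 1/((n:ℝ)+1)^2 := by rw [hc]; field_simp; ring
      rw [h3] at hCS
      have h4 : (1:ℝ)/(((n:ℝ)+1)^2 * (n:ℝ)) ≤ ∑ i ∈ Finset.univ.erase i0, (l i - c)^2 := by
        rw [div_le_iff₀ (by positivity)] at hCS ⊢
        nlinarith [hCS]
      rw [h2]
      have : (1:ℝ) / ((n:ℝ) * ((n:ℝ)+1)) = 1/((n:ℝ)+1)^2 + 1/(((n:ℝ)+1)^2 * (n:ℝ)) := by
        field_simp
      rw [this]
      linarith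
    have h6 : (2:ℝ) / ((n:ℝ)*((n:ℝ)+1)) = 2 * (1/((n:ℝ)*((n:ℝ)+1))) := by ring
    rw [h6]
    linarith
end
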